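/- arXiv:2011.00862 — 3 statements merged into one kernel-verified Lean document; each statement's English description precedes it below -/
import Mathlib

section
/- Let f : E(K_{4n}) → {-1,1} be an edge-labelling with total sum zero. Then there exists a perfect matching M of K_{4n} with ∑_{e ∈ M} f(e) = 0. -/
open Finset

/-- All edges of the complete graph on `Fin N`. -/
def allEdges (N : ℕ) : Finset (Sym2 (Fin N)) :=
  Finset.univ.filter (fun e => ¬ e.IsDiag)

/-- `M` is a perfect matching of the complete graph on `Fin N`:
a set of non-loop edges such that every vertex lies in exactly one edge. -/
def IsPM {N : ℕ} (M : Finset (Sym2 (Fin N))) : Prop :=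
  (∀ e ∈ M, ¬ e.IsDiag) ∧ ∀ v : Fin N, ∃! e, e ∈ M ∧ v ∈ e

/-- Number of edges of `F` with colour `b` (`true` = red, `false` = black). -/
def cnt {N : ℕ} (c : Sym2 (Fin N) → Bool) (b : Bool) (F : Finset (Sym2 (Fin N))) : ℕ :=
  (F.filter (fun e => c e = b)).card

/-- Vertices incident to a black edge of `M`. -/
def VB {N : ℕ} (c : Sym2 (Fin N) → Bool) (M : Finset (Sym2 (Fin N))) : Finset (Fin N) :=
  Finset.univ.filter (fun v => ∃ e ∈ M, v ∈ e ∧ c e = false)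

/-- Vertices incident to a red edge of `M`. -/
def VR {N : ℕ} (c : Sym2 (Fin N) → Bool) (M : Finset (Sym2 (Fin N))) : Finset (Fin N) :=
  Finset.univ.filter (fun v => ∃ e ∈ M, v ∈ e ∧ c e = true)

/-- Edges with one endpoint in `S` and the other in `T`. -/
def between {N : ℕ} (S T : Finset (Fin N)) : Finset (Sym2 (Fin N)) :=
  (allEdges N).filter (fun e => ∃ a ∈ S, ∃ b ∈ T, e = s(a, b))

/-- Edges of the induced subgraph on `S`. -/
def inside {N : ℕ} (S : Finset (Fin N)) : Finset (Sym2 (Fin N)) :=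
  (allEdges N).filter (fun e => ∀ v ∈ e, v ∈ S)

/-- The swapping operation `S(M, u, v, x, y)`: replace `{uv, xy}` by `{ux, vy}`. -/
def swap {N : ℕ} (M : Finset (Sym2 (Fin N))) (u v x y : Fin N) : Finset (Sym2 (Fin N)) :=
  (M \ {s(u, v), s(x, y)}) ∪ {s(u, x), s(v, y)}

section Basics
variable {N : ℕ}

lemma mem_allEdges {e : Sym2 (Fin N)} : e ∈ allEdges N ↔ ¬ e.IsDiag := by
  simp [allEdges]

lemma mk_mem_allEdges {a b : Fin N} (h : a ≠ b) : s(a, b) ∈ allEdges N := by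
  simp [allEdges, h]

variable {M : Finset (Sym2 (Fin N))}

lemma IsPM.unique (hM : IsPM M) {e e' : Sym2 (Fin N)} {v : Fin N}
    (he : e ∈ M) (he' : e' ∈ M) (hv : v ∈ e) (hv' : v ∈ e') : e = e' := by
  obtain ⟨e'', -, hu⟩ := hM.2 v
  rw [hu e ⟨he, hv⟩, hu e' ⟨he', hv'⟩]

lemma IsPM.labels (hM : IsPM M) {e : Sym2 (Fin N)} (he : e ∈ M) :
    ∃ a b : Fin N, a ≠ b ∧ e = s(a, b) := by
  induction e with
  | _ a b => exact ⟨a, b, fun h => hM.1 _ he (by simp [h]), rfl⟩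

/-- pairwise distinctness of the four endpoints of two distinct matching edges -/
lemma IsPM.four (hM : IsPM M) {a b c d : Fin N} (h1 : s(a,b) ∈ M) (h2 : s(c,d) ∈ M)
    (hne : s(a,b) ≠ s(c,d)) :
    a ≠ b ∧ c ≠ d ∧ a ≠ c ∧ a ≠ d ∧ b ≠ c ∧ b ≠ d := by
  have hab : a ≠ b := fun h => hM.1 _ h1 (by simp [h])
  have hcd : c ≠ d := fun h => hM.1 _ h2 (by simp [h])
  refine ⟨hab, hcd, ?_, ?_, ?_, ?_⟩
  · rintro rfl
    exact hne (hM.unique (v := a) h1 h2 (by simp) (by simp))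
  · rintro rfl
    exact hne (hM.unique (v := a) h1 h2 (by simp) (by simp))
  · rintro rfl
    exact hne (hM.unique (v := b) h1 h2 (by simp) (by simp))
  · rintro rfl
    exact hne (hM.unique (v := b) h1 h2 (by simp) (by simp))
end Basics

section Helpers
variable {N : ℕ} {f : Sym2 (Fin N) → ℤ}

lemma sym2_ne_of_ne {p q r t : Fin N} (h1 : p ≠ r) (h2 : p ≠ t) : s(p,q) ≠ s(r,t) := by
  intro h
  rw [Sym2.eq_iff] at h
  tauto

lemma ne_of_fne {e e' : Sym2 (Fin N)} (h : f e = 1) (h' : f e' = -1) : e ≠ e' := by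
  rintro rfl
  omega

lemma fpm (hf : ∀ e ∈ allEdges N, f e = 1 ∨ f e = -1) {a b : Fin N} (h : a ≠ b) :
    f s(a,b) = 1 ∨ f s(a,b) = -1 :=
  hf _ (by simp [allEdges, h])

end Helpers

section SwapLemma
variable {N : ℕ} {M : Finset (Sym2 (Fin N))} {f : Sym2 (Fin N) → ℤ}

variable {u v x y : Fin N}

lemma swap_isPM (hM : IsPM M) (huv : s(u,v) ∈ M) (hxy : s(x,y) ∈ M)
    (hne : s(u,v) ≠ s(x,y))
    (hfour : u ≠ v ∧ x ≠ y ∧ u ≠ x ∧ u ≠ y ∧ v ≠ x ∧ v ≠ y) :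
    IsPM (swap M u v x y) := by
  obtain ⟨huv', hxy', hux, huy, hvx, hvy⟩ := hfour
  constructor
  · intro e he
    simp only [swap, mem_union, mem_sdiff, mem_insert, mem_singleton] at he
    rcases he with ⟨heM, -⟩ | rfl | rfl
    · exact hM.1 e heM
    · simp [hux]
    · simp [hvy]
  · intro w
    by_cases hw1 : w = u ∨ w = x
    · refine ⟨s(u,x), ⟨by simp [swap], by rcases hw1 with rfl | rfl <;> simp⟩, ?_⟩
      rintro e ⟨he, hwe⟩
      simp only [swap, mem_union, mem_sdiff, mem_insert, mem_singleton] at he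
      rcases he with ⟨heM, hne2⟩ | rfl | rfl
      · exfalso
        rcases hw1 with rfl | rfl
        · exact hne2 (Or.inl (hM.unique heM huv hwe (by simp)))
        · exact hne2 (Or.inr (hM.unique heM hxy hwe (by simp)))
      · rfl
      · exfalso
        simp only [Sym2.mem_iff] at hwe
        rcases hw1 with rfl | rfl <;> rcases hwe with rfl | rfl <;> simp_all
    · by_cases hw2 : w = v ∨ w = y
      · refine ⟨s(v,y), ⟨by simp [swap], by rcases hw2 with rfl | rfl <;> simp⟩, ?_⟩
        rintro e ⟨he, hwe⟩
        simp only [swap, mem_union, mem_sdiff, mem_insert, mem_singleton] at he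
        rcases he with ⟨heM, hne2⟩ | rfl | rfl
        · exfalso
          rcases hw2 with rfl | rfl
          · exact hne2 (Or.inl (hM.unique heM huv hwe (by simp)))
          · exact hne2 (Or.inr (hM.unique heM hxy hwe (by simp)))
        · exfalso
          simp only [Sym2.mem_iff] at hwe
          rcases hw2 with rfl | rfl <;> rcases hwe with rfl | rfl <;> simp_all
        · rfl
      · push_neg at hw1 hw2
        obtain ⟨e, ⟨heM, hwe⟩, hu'⟩ := hM.2 w
        have he1 : e ≠ s(u,v) := by
          rintro rfl
          simp only [Sym2.mem_iff] at hwe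
          tauto
        have he2 : e ≠ s(x,y) := by
          rintro rfl
          simp only [Sym2.mem_iff] at hwe
          tauto
        refine ⟨e, ⟨by simp [swap, heM, he1, he2], hwe⟩, ?_⟩
        rintro e' ⟨he', hwe'⟩
        simp only [swap, mem_union, mem_sdiff, mem_insert, mem_singleton] at he'
        rcases he' with ⟨he'M, -⟩ | rfl | rfl
        · exact hM.unique he'M heM hwe' hwe
        · exfalso; simp only [Sym2.mem_iff] at hwe'; tauto
        · exfalso; simp only [Sym2.mem_iff] at hwe'; tauto

lemma swap_mem_left : s(u,x) ∈ swap M u v x y := by simp [swap]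
lemma swap_mem_right : s(v,y) ∈ swap M u v x y := by simp [swap]
lemma swap_mem_keep {e : Sym2 (Fin N)} (he : e ∈ M) (h1 : e ≠ s(u,v)) (h2 : e ≠ s(x,y)) :
    e ∈ swap M u v x y := by simp [swap, he, h1, h2]

lemma swap_sum (hM : IsPM M) (huv : s(u,v) ∈ M) (hxy : s(x,y) ∈ M)
    (hne : s(u,v) ≠ s(x,y))
    (hfour : u ≠ v ∧ x ≠ y ∧ u ≠ x ∧ u ≠ y ∧ v ≠ x ∧ v ≠ y) :
    ∑ e ∈ swap M u v x y, f e
      = ∑ e ∈ M, f e - f s(u,v) - f s(x,y) + f s(u,x) + f s(v,y) := by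
  obtain ⟨huv', hxy', hux, huy, hvx, hvy⟩ := hfour
  have hUXnotM : s(u,x) ∉ M := fun h =>
    hvx (Sym2.congr_right.mp (hM.unique (v := u) huv h (by simp) (by simp)))
  have hVYnotM : s(v,y) ∉ M := fun h =>
    hvx (Sym2.congr_left.mp (hM.unique (v := y) h hxy (by simp) (by simp)))
  have hpair : s(u,x) ≠ s(v,y) := by
    intro h
    rw [Sym2.eq_iff] at h
    rcases h with ⟨h1, -⟩ | ⟨h1, -⟩
    · exact huv' h1
    · exact huy h1
  have hsub : {s(u,v), s(x,y)} ⊆ M := by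
    intro e he
    simp only [mem_insert, mem_singleton] at he
    rcases he with rfl | rfl <;> assumption
  have hdisj : Disjoint (M \ {s(u,v), s(x,y)}) ({s(u,x), s(v,y)} : Finset (Sym2 (Fin N))) := by
    rw [Finset.disjoint_right]
    intro e he
    simp only [mem_insert, mem_singleton] at he
    simp only [mem_sdiff]
    rcases he with rfl | rfl
    · exact fun h => hUXnotM h.1
    · exact fun h => hVYnotM h.1
  rw [swap, sum_union hdisj, sum_pair hpair, sum_sdiff_eq_sub hsub, sum_pair hne]
  ring
end SwapLemma


section Comm
variable {N : ℕ} {f : Sym2 (Fin N) → ℤ} {M : Finset (Sym2 (Fin N))} {x y : Fin N}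

lemma mem_comm' (h : s(x,y) ∈ M) : s(y,x) ∈ M := by rwa [Sym2.eq_swap]
lemma f_eq_comm {z : ℤ} (h : f s(x,y) = z) : f s(y,x) = z := by rwa [Sym2.eq_swap]
lemma ne_comm_l {e : Sym2 (Fin N)} (h : s(x,y) ≠ e) : s(y,x) ≠ e := by rwa [Sym2.eq_swap]
lemma ne_comm_r {e : Sym2 (Fin N)} (h : e ≠ s(x,y)) : e ≠ s(y,x) := by
  rw [Sym2.eq_swap] at h; exact h

end Comm

section Instances
variable {N : ℕ} {f : Sym2 (Fin N) → ℤ} {M : Finset (Sym2 (Fin N))}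
variable {a a' w w' u u' c d c' d' : Fin N}

/-- I1: mono pairing for two red matching edges -/
lemma mono (hf : ∀ e ∈ allEdges N, f e = 1 ∨ f e = -1)
    (stuck : ∀ M' : Finset (Sym2 (Fin N)), IsPM M' → ∑ e ∈ M', f e ≠ 0)
    (hM : IsPM M) (hs : ∑ e ∈ M, f e = 2)
    (h1 : s(a,a') ∈ M) (h2 : s(c,d) ∈ M) (hne : s(a,a') ≠ s(c,d))
    (hr1 : f s(a,a') = 1) (hr2 : f s(c,d) = 1) :
    f s(a,c) = f s(a',d) := by
  obtain ⟨q1, q2, q3, q4, q5, q6⟩ := hM.four h1 h2 hne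
  have hpm := swap_isPM hM h1 h2 hne ⟨q1, q2, q3, q4, q5, q6⟩
  have hsum := swap_sum (f := f) hM h1 h2 hne ⟨q1, q2, q3, q4, q5, q6⟩
  have hz := stuck _ hpm
  rw [hsum, hs, hr1, hr2] at hz
  rcases fpm hf q3 with h | h <;> rcases fpm hf q6 with h' | h' <;> omega

/-- I2: red-black pairing is not all-black -/
lemma mixed_nonneg (hf : ∀ e ∈ allEdges N, f e = 1 ∨ f e = -1)
    (stuck : ∀ M' : Finset (Sym2 (Fin N)), IsPM M' → ∑ e ∈ M', f e ≠ 0)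
    (hM : IsPM M) (hs : ∑ e ∈ M, f e = 2)
    (h1 : s(a,a') ∈ M) (h2 : s(c,d) ∈ M)
    (hr1 : f s(a,a') = 1) (hr2 : f s(c,d) = -1) :
    0 ≤ f s(a,c) + f s(a',d) := by
  have hne : s(a,a') ≠ s(c,d) := ne_of_fne hr1 hr2
  obtain ⟨q1, q2, q3, q4, q5, q6⟩ := hM.four h1 h2 hne
  have hpm := swap_isPM hM h1 h2 hne ⟨q1, q2, q3, q4, q5, q6⟩
  have hsum := swap_sum (f := f) hM h1 h2 hne ⟨q1, q2, q3, q4, q5, q6⟩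
  have hz := stuck _ hpm
  rw [hsum, hs, hr1, hr2] at hz
  rcases fpm hf q3 with h | h <;> rcases fpm hf q6 with h' | h' <;> omega

/-- I3: transfer relation via one black cross edge between two red edges and a black edge -/
lemma transfer_rel (hf : ∀ e ∈ allEdges N, f e = 1 ∨ f e = -1)
    (stuck : ∀ M' : Finset (Sym2 (Fin N)), IsPM M' → ∑ e ∈ M', f e ≠ 0)
    (hM : IsPM M) (hs : ∑ e ∈ M, f e = 2)
    (hA : s(a,a') ∈ M) (hB : s(w,w') ∈ M) (hG : s(c,d) ∈ M)
    (hAB : s(a,a') ≠ s(w,w'))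
    (hrA : f s(a,a') = 1) (hrB : f s(w,w') = 1) (hbG : f s(c,d) = -1)
    (hblk : f s(a,w) = -1) :
    f s(a',c) = f s(w',d) := by
  have hAG : s(a,a') ≠ s(c,d) := ne_of_fne hrA hbG
  have hBG : s(w,w') ≠ s(c,d) := ne_of_fne hrB hbG
  obtain ⟨p1, p2, p3, p4, p5, p6⟩ := hM.four hA hB hAB
  obtain ⟨-, p7, p8, p9, p10, p11⟩ := hM.four hA hG hAG
  obtain ⟨-, -, p12, p13, p14, p15⟩ := hM.four hB hG hBG
  have h4a : a ≠ a' ∧ w ≠ w' ∧ a ≠ w ∧ a ≠ w' ∧ a' ≠ w ∧ a' ≠ w' := ⟨p1, p2, p3, p4, p5, p6⟩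
  have hpm1 := swap_isPM hM hA hB hAB h4a
  have hsum1 := swap_sum (f := f) hM hA hB hAB h4a
  -- step 2 on M1 := swap M a a' w w' : remove s(a',w') and s(c,d), add s(a',c), s(w',d)
  have hmem1 : s(a',w') ∈ swap M a a' w w' := swap_mem_right
  have hmem2 : s(c,d) ∈ swap M a a' w w' := swap_mem_keep hG hAG.symm hBG.symm
  have hne2 : s(a',w') ≠ s(c,d) := sym2_ne_of_ne p10 p11
  have h4b : a' ≠ w' ∧ c ≠ d ∧ a' ≠ c ∧ a' ≠ d ∧ w' ≠ c ∧ w' ≠ d :=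
    ⟨p6, p7, p10, p11, p14, p15⟩
  have hpm2 := swap_isPM hpm1 hmem1 hmem2 hne2 h4b
  have hsum2 := swap_sum (f := f) hpm1 hmem1 hmem2 hne2 h4b
  have hz := stuck _ hpm2
  rw [hsum2, hsum1, hs, hrA, hrB, hbG, hblk] at hz
  rcases fpm hf p10 with h | h <;> rcases fpm hf p15 with h' | h' <;> omega

/-- I4: the `D` lemma -/
lemma lemD (hf : ∀ e ∈ allEdges N, f e = 1 ∨ f e = -1)
    (stuck : ∀ M' : Finset (Sym2 (Fin N)), IsPM M' → ∑ e ∈ M', f e ≠ 0)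
    (hM : IsPM M) (hs : ∑ e ∈ M, f e = 2)
    (hA : s(a,a') ∈ M) (hB : s(w,w') ∈ M) (hC : s(u,u') ∈ M)
    (hAB : s(a,a') ≠ s(w,w')) (hAC : s(a,a') ≠ s(u,u')) (hBC : s(w,w') ≠ s(u,u'))
    (hrA : f s(a,a') = 1) (hrB : f s(w,w') = 1) (hrC : f s(u,u') = 1)
    (hcross : f s(a',w') = 1) (hred : f s(a,u) = 1) :
    f s(w,u') = 1 := by
  obtain ⟨p1, p2, p3, p4, p5, p6⟩ := hM.four hA hB hAB
  obtain ⟨-, p7, p8, p9, p10, p11⟩ := hM.four hA hC hAC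
  obtain ⟨-, -, p12, p13, p14, p15⟩ := hM.four hB hC hBC
  have h4a : a ≠ a' ∧ u ≠ u' ∧ a ≠ u ∧ a ≠ u' ∧ a' ≠ u ∧ a' ≠ u' := ⟨p1, p7, p8, p9, p10, p11⟩
  have hpm1 := swap_isPM hM hA hC hAC h4a
  have hsum1 := swap_sum (f := f) hM hA hC hAC h4a
  -- step 2 : remove s(a',u') and s(w',w), add s(a',w'), s(u',w)
  have hmem1 : s(a',u') ∈ swap M a a' u u' := swap_mem_right
  have hBswap : s(w',w) ∈ M := by rwa [Sym2.eq_swap] at hB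
  have hmem2 : s(w',w) ∈ swap M a a' u u' := by
    refine swap_mem_keep hBswap ?_ ?_
    · rw [Sym2.eq_swap]; exact hAB.symm
    · rw [Sym2.eq_swap]; exact hBC
  have hne2 : s(a',u') ≠ s(w',w) := sym2_ne_of_ne p6 p5
  have h4b : a' ≠ u' ∧ w' ≠ w ∧ a' ≠ w' ∧ a' ≠ w ∧ u' ≠ w' ∧ u' ≠ w :=
    ⟨p11, p2.symm, p6, p5, p15.symm, p13.symm⟩
  have hpm2 := swap_isPM hpm1 hmem1 hmem2 hne2 h4b
  have hsum2 := swap_sum (f := f) hpm1 hmem1 hmem2 hne2 h4b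
  have hz := stuck _ hpm2
  have hrB' : f s(w',w) = 1 := by rwa [Sym2.eq_swap]
  rw [hsum2, hsum1, hs, hrA, hrC, hred, hrB', hcross] at hz
  rw [show s(w,u') = s(u',w) from Sym2.eq_swap]
  rcases fpm hf (show u' ≠ w from p13.symm) with h | h <;> omega

/-- I5: 4-swap — both inner pairings between two black edges are monochromatic,
given a red pair with an all-black pairing. -/
lemma bb_mono (hf : ∀ e ∈ allEdges N, f e = 1 ∨ f e = -1)
    (stuck : ∀ M' : Finset (Sym2 (Fin N)), IsPM M' → ∑ e ∈ M', f e ≠ 0)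
    (hM : IsPM M) (hs : ∑ e ∈ M, f e = 2)
    {p p' q q' : Fin N}
    (hX : s(p,p') ∈ M) (hY : s(q,q') ∈ M) (hXY : s(p,p') ≠ s(q,q'))
    (hrX : f s(p,p') = 1) (hrY : f s(q,q') = 1)
    (hb1 : f s(p,q) = -1) (hb2 : f s(p',q') = -1)
    (hG : s(c,d) ∈ M) (hH : s(c',d') ∈ M) (hGH : s(c,d) ≠ s(c',d'))
    (hbG : f s(c,d) = -1) (hbH : f s(c',d') = -1) :
    f s(c,c') = f s(d,d') := by
  obtain ⟨p1, p2, p3, p4, p5, p6⟩ := hM.four hX hY hXY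
  obtain ⟨-, p7, -, -, -, -⟩ := hM.four hX hG (ne_of_fne hrX hbG)
  obtain ⟨-, p8, -, -, -, -⟩ := hM.four hX hH (ne_of_fne hrX hbH)
  obtain ⟨-, -, r1, r2, r3, r4⟩ := hM.four hG hH hGH
  have h4a : p ≠ p' ∧ q ≠ q' ∧ p ≠ q ∧ p ≠ q' ∧ p' ≠ q ∧ p' ≠ q' := ⟨p1, p2, p3, p4, p5, p6⟩
  have hpm1 := swap_isPM hM hX hY hXY h4a
  have hsum1 := swap_sum (f := f) hM hX hY hXY h4a
  have hmem1 : s(c,d) ∈ swap M p p' q q' :=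
    swap_mem_keep hG (ne_of_fne hrX hbG).symm (ne_of_fne hrY hbG).symm
  have hmem2 : s(c',d') ∈ swap M p p' q q' :=
    swap_mem_keep hH (ne_of_fne hrX hbH).symm (ne_of_fne hrY hbH).symm
  have h4b : c ≠ d ∧ c' ≠ d' ∧ c ≠ c' ∧ c ≠ d' ∧ d ≠ c' ∧ d ≠ d' := ⟨p7, p8, r1, r2, r3, r4⟩
  have hpm2 := swap_isPM hpm1 hmem1 hmem2 hGH h4b
  have hsum2 := swap_sum (f := f) hpm1 hmem1 hmem2 hGH h4b
  have hz := stuck _ hpm2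
  rw [hsum2, hsum1, hs, hrX, hrY, hb1, hb2, hbG, hbH] at hz
  rcases fpm hf r1 with h | h <;> rcases fpm hf r4 with h' | h' <;> omega


/-- L1 : two all-red pairs at a common red edge force the third pair all-red -/
lemma lemL1 (hf : ∀ e ∈ allEdges N, f e = 1 ∨ f e = -1)
    (stuck : ∀ M' : Finset (Sym2 (Fin N)), IsPM M' → ∑ e ∈ M', f e ≠ 0)
    (hM : IsPM M) (hs : ∑ e ∈ M, f e = 2)
    (hA : s(a,a') ∈ M) (hB : s(w,w') ∈ M) (hC : s(u,u') ∈ M)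
    (hAB : s(a,a') ≠ s(w,w')) (hAC : s(a,a') ≠ s(u,u')) (hBC : s(w,w') ≠ s(u,u'))
    (hrA : f s(a,a') = 1) (hrB : f s(w,w') = 1) (hrC : f s(u,u') = 1)
    (h1 : f s(a,w) = 1) (h2 : f s(a,w') = 1) (h3 : f s(a',w) = 1) (h4 : f s(a',w') = 1)
    (h5 : f s(a,u) = 1) (h6 : f s(a,u') = 1) (h7 : f s(a',u) = 1) (h8 : f s(a',u') = 1) :
    f s(w,u) = 1 ∧ f s(w,u') = 1 ∧ f s(w',u) = 1 ∧ f s(w',u') = 1 := by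
  refine ⟨?_, ?_, ?_, ?_⟩
  · exact lemD hf stuck hM hs hA hB (mem_comm' hC) hAB (ne_comm_r hAC) (ne_comm_r hBC)
      hrA hrB (f_eq_comm hrC) h4 h6
  · exact lemD hf stuck hM hs hA hB hC hAB hAC hBC hrA hrB hrC h4 h5
  · exact lemD hf stuck hM hs hA (mem_comm' hB) (mem_comm' hC) (ne_comm_r hAB)
      (ne_comm_r hAC) (by rw [Sym2.eq_swap]; exact ne_comm_r hBC)
      hrA (f_eq_comm hrB) (f_eq_comm hrC) h3 h6
  · exact lemD hf stuck hM hs hA (mem_comm' hB) hC (ne_comm_r hAB) hAC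
      (by rw [Sym2.eq_swap]; exact hBC) hrA (f_eq_comm hrB) hrC h3 h5

/-- L2' : an all-red pair plus a red pairing force all-red -/
lemma lemL2 (hf : ∀ e ∈ allEdges N, f e = 1 ∨ f e = -1)
    (stuck : ∀ M' : Finset (Sym2 (Fin N)), IsPM M' → ∑ e ∈ M', f e ≠ 0)
    (hM : IsPM M) (hs : ∑ e ∈ M, f e = 2)
    (hA : s(a,a') ∈ M) (hB : s(w,w') ∈ M) (hC : s(u,u') ∈ M)
    (hAB : s(a,a') ≠ s(w,w')) (hAC : s(a,a') ≠ s(u,u')) (hBC : s(w,w') ≠ s(u,u'))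
    (hrA : f s(a,a') = 1) (hrB : f s(w,w') = 1) (hrC : f s(u,u') = 1)
    (h1 : f s(a,w) = 1) (h2 : f s(a,w') = 1) (h3 : f s(a',w) = 1) (h4 : f s(a',w') = 1)
    (h5 : f s(a,u) = 1) (h8 : f s(a',u') = 1) :
    f s(a,u') = 1 ∧ f s(a',u) = 1 := by
  have k2 : f s(w,u') = 1 :=
    lemD hf stuck hM hs hA hB hC hAB hAC hBC hrA hrB hrC h4 h5
  have k1 : f s(w,u) = 1 :=
    lemD hf stuck hM hs (mem_comm' hA) hB (mem_comm' hC) (ne_comm_l hAB)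
      (by rw [Sym2.eq_swap]; exact ne_comm_r hAC) (ne_comm_r hBC)
      (f_eq_comm hrA) hrB (f_eq_comm hrC) h2 h8
  have k4 : f s(w',u') = 1 :=
    lemD hf stuck hM hs hA (mem_comm' hB) hC (ne_comm_r hAB) hAC (ne_comm_l hBC)
      hrA (f_eq_comm hrB) hrC h3 h5
  have k3 : f s(w',u) = 1 :=
    lemD hf stuck hM hs (mem_comm' hA) (mem_comm' hB) (mem_comm' hC)
      (ne_comm_l (ne_comm_r hAB)) (ne_comm_l (ne_comm_r hAC)) (ne_comm_l (ne_comm_r hBC))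
      (f_eq_comm hrA) (f_eq_comm hrB) (f_eq_comm hrC) h1 h8
  have := lemL1 hf stuck hM hs hB hA hC hAB.symm hBC hAC hrB hrA hrC
    (f_eq_comm h1) (f_eq_comm h3) (f_eq_comm h2) (f_eq_comm h4) k1 k2 k3 k4
  exact ⟨this.2.1, this.2.2.1⟩


/-- Transfer of column products between two red edges with a black cross edge. -/
lemma transfer_pi (hf : ∀ e ∈ allEdges N, f e = 1 ∨ f e = -1)
    (stuck : ∀ M' : Finset (Sym2 (Fin N)), IsPM M' → ∑ e ∈ M', f e ≠ 0)
    (hM : IsPM M) (hs : ∑ e ∈ M, f e = 2)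
    (hA : s(a,a') ∈ M) (hB : s(w,w') ∈ M) (hG : s(c,d) ∈ M)
    (hAB : s(a,a') ≠ s(w,w'))
    (hrA : f s(a,a') = 1) (hrB : f s(w,w') = 1) (hbG : f s(c,d) = -1)
    (hblk : f s(a,w) = -1) :
    f s(a,c) * f s(a',c) = f s(w,d) * f s(w',d)
      ∧ f s(a,d) * f s(a',d) = f s(w,c) * f s(w',c) := by
  have hblk2 : f s(a',w') = -1 := by
    have := mono hf stuck hM hs hA hB hAB hrA hrB
    omega
  have r1 : f s(a',c) = f s(w',d) :=
    transfer_rel hf stuck hM hs hA hB hG hAB hrA hrB hbG hblk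
  have r2 : f s(a,c) = f s(w,d) :=
    transfer_rel hf stuck hM hs (mem_comm' hA) (mem_comm' hB) hG
      (ne_comm_l (ne_comm_r hAB)) (f_eq_comm hrA) (f_eq_comm hrB) hbG hblk2
  have r3 : f s(a',d) = f s(w',c) :=
    transfer_rel hf stuck hM hs hA hB (mem_comm' hG) hAB hrA hrB (f_eq_comm hbG) hblk
  have r4 : f s(a,d) = f s(w,c) :=
    transfer_rel hf stuck hM hs (mem_comm' hA) (mem_comm' hB) (mem_comm' hG)
      (ne_comm_l (ne_comm_r hAB)) (f_eq_comm hrA) (f_eq_comm hrB) (f_eq_comm hbG) hblk2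
  rw [r1, r2, r3, r4]
  exact ⟨rfl, rfl⟩

/-- Canonical form: a black cross edge somewhere between two red edges
transfers column products (with a column swap). -/
lemma transfer_pi_canon (hf : ∀ e ∈ allEdges N, f e = 1 ∨ f e = -1)
    (stuck : ∀ M' : Finset (Sym2 (Fin N)), IsPM M' → ∑ e ∈ M', f e ≠ 0)
    (hM : IsPM M) (hs : ∑ e ∈ M, f e = 2)
    (hA : s(a,a') ∈ M) (hB : s(w,w') ∈ M) (hG : s(c,d) ∈ M)
    (hAB : s(a,a') ≠ s(w,w'))
    (hrA : f s(a,a') = 1) (hrB : f s(w,w') = 1) (hbG : f s(c,d) = -1)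
    (hblk : f s(a,w) = -1 ∨ f s(a,w') = -1 ∨ f s(a',w) = -1 ∨ f s(a',w') = -1) :
    f s(a,c) * f s(a',c) = f s(w,d) * f s(w',d)
      ∧ f s(a,d) * f s(a',d) = f s(w,c) * f s(w',c) := by
  rcases hblk with h | h | h | h
  · exact transfer_pi hf stuck hM hs hA hB hG hAB hrA hrB hbG h
  · have := transfer_pi hf stuck hM hs hA (mem_comm' hB) hG (ne_comm_r hAB)
      hrA (f_eq_comm hrB) hbG h
    constructor <;> [linear_combination this.1; linear_combination this.2]
  · have := transfer_pi hf stuck hM hs (mem_comm' hA) hB hG (ne_comm_l hAB)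
      (f_eq_comm hrA) hrB hbG h
    constructor <;> [linear_combination this.1; linear_combination this.2]
  · have := transfer_pi hf stuck hM hs (mem_comm' hA) (mem_comm' hB) hG
      (ne_comm_l (ne_comm_r hAB)) (f_eq_comm hrA) (f_eq_comm hrB) hbG h
    constructor <;> [linear_combination this.1; linear_combination this.2]

/-- Collapse: if all four cross edges between two red edges are black, the two
endpoints of a red edge have equal colours towards any black vertex. -/
lemma collapse_pi (hf : ∀ e ∈ allEdges N, f e = 1 ∨ f e = -1)
    (stuck : ∀ M' : Finset (Sym2 (Fin N)), IsPM M' → ∑ e ∈ M', f e ≠ 0)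
    (hM : IsPM M) (hs : ∑ e ∈ M, f e = 2)
    (hA : s(a,a') ∈ M) (hB : s(w,w') ∈ M) (hG : s(c,d) ∈ M)
    (hAB : s(a,a') ≠ s(w,w'))
    (hrA : f s(a,a') = 1) (hrB : f s(w,w') = 1) (hbG : f s(c,d) = -1)
    (hb1 : f s(a,w) = -1) (hb3 : f s(a',w) = -1) :
    f s(a,c) = f s(a',c) ∧ f s(a,d) = f s(a',d) := by
  have e1 : f s(a',c) = f s(w',d) :=
    transfer_rel hf stuck hM hs hA hB hG hAB hrA hrB hbG hb1
  have e2 : f s(a,c) = f s(w',d) :=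
    transfer_rel hf stuck hM hs (mem_comm' hA) hB hG (ne_comm_l hAB)
      (f_eq_comm hrA) hrB hbG hb3
  have e3 : f s(a',d) = f s(w',c) :=
    transfer_rel hf stuck hM hs hA hB (mem_comm' hG) hAB hrA hrB (f_eq_comm hbG) hb1
  have e4 : f s(a,d) = f s(w',c) :=
    transfer_rel hf stuck hM hs (mem_comm' hA) hB (mem_comm' hG) (ne_comm_l hAB)
      (f_eq_comm hrA) hrB (f_eq_comm hbG) hb3
  omega


lemma tau_aux (hf : ∀ e ∈ allEdges N, f e = 1 ∨ f e = -1)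
    (stuck : ∀ M' : Finset (Sym2 (Fin N)), IsPM M' → ∑ e ∈ M', f e ≠ 0)
    (hM : IsPM M) (hs : ∑ e ∈ M, f e = 2)
    (hthird : ∀ e1 e2 : Sym2 (Fin N), ∃ e3, e3 ∈ M ∧ f e3 = 1 ∧ e3 ≠ e1 ∧ e3 ≠ e2)
    (hA : s(a,a') ∈ M) (hB : s(w,w') ∈ M) (hG : s(c,d) ∈ M)
    (hAB : s(a,a') ≠ s(w,w'))
    (hrA : f s(a,a') = 1) (hrB : f s(w,w') = 1) (hbG : f s(c,d) = -1)
    (hblk : f s(a,w) = -1) :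
    f s(a,c) * f s(a',c) * (f s(a,d) * f s(a',d)) = 1 := by
  obtain ⟨-, -, g1, g2, g3, g4⟩ := hM.four hA hG (ne_of_fne hrA hbG)
  obtain ⟨-, -, m1, m2, m3, m4⟩ := hM.four hA hB hAB
  by_cases hcase : f s(a,w') = -1
  · -- the pair (A,B) is all-black : collapse
    have hb3 : f s(a',w) = -1 := by
      have := mono hf stuck hM hs hA (mem_comm' hB) (ne_comm_r hAB) hrA (f_eq_comm hrB)
      omega
    have hcol := collapse_pi hf stuck hM hs hA hB hG hAB hrA hrB hbG hblk hb3
    rw [← hcol.1, ← hcol.2]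
    rcases fpm hf g1 with h | h <;> rcases fpm hf g2 with h' | h' <;>
      rw [h, h'] <;> norm_num
  · have hred2 : f s(a,w') = 1 := by rcases fpm hf m2 with h | h <;> omega
    have hred3 : f s(a',w) = 1 := by
      have := mono hf stuck hM hs hA (mem_comm' hB) (ne_comm_r hAB) hrA (f_eq_comm hrB)
      omega
    obtain ⟨C, hCmem, hCr, hCA, hCB⟩ := hthird s(a,a') s(w,w')
    obtain ⟨u, u', huu, rfl⟩ := hM.labels hCmem
    obtain ⟨-, -, n1, n2, n3, n4⟩ := hM.four hA hCmem hCA.symm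
    obtain ⟨-, -, q1, q2, q3, q4⟩ := hM.four hB hCmem hCB.symm
    have hnotAC : f s(a,u) = -1 ∨ f s(a,u') = -1 ∨ f s(a',u) = -1 ∨ f s(a',u') = -1 := by
      by_contra hall
      push_neg at hall
      obtain ⟨k1, k2, k3, k4⟩ := hall
      have g1' : f s(a,u) = 1 := by rcases fpm hf n1 with h | h <;> omega
      have g2' : f s(a,u') = 1 := by rcases fpm hf n2 with h | h <;> omega
      have g3' : f s(a',u) = 1 := by rcases fpm hf n3 with h | h <;> omega
      have g4' : f s(a',u') = 1 := by rcases fpm hf n4 with h | h <;> omega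
      have := lemL2 hf stuck hM hs hA hCmem (mem_comm' hB) hCA.symm (ne_comm_r hAB)
        (ne_comm_r hCB) hrA hCr (f_eq_comm hrB) g1' g2' g3' g4' hred2 hred3
      omega
    have hnotBC : f s(w,u) = -1 ∨ f s(w,u') = -1 ∨ f s(w',u) = -1 ∨ f s(w',u') = -1 := by
      by_contra hall
      push_neg at hall
      obtain ⟨k1, k2, k3, k4⟩ := hall
      have g1' : f s(w,u) = 1 := by rcases fpm hf q1 with h | h <;> omega
      have g2' : f s(w,u') = 1 := by rcases fpm hf q2 with h | h <;> omega
      have g3' : f s(w',u) = 1 := by rcases fpm hf q3 with h | h <;> omega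
      have g4' : f s(w',u') = 1 := by rcases fpm hf q4 with h | h <;> omega
      have := lemL2 hf stuck hM hs hB hCmem (mem_comm' hA) hCB.symm
        (ne_comm_r hAB.symm) (ne_comm_r hCA) hrB hCr (f_eq_comm hrA) g1' g2' g3' g4'
        (f_eq_comm hred3) (f_eq_comm hred2)
      have hwa : f s(w,a) = -1 := f_eq_comm hblk
      omega
    have tAB := transfer_pi_canon hf stuck hM hs hA hB hG hAB hrA hrB hbG (Or.inl hblk)
    have tAC := transfer_pi_canon hf stuck hM hs hA hCmem hG hCA.symm hrA hCr hbG hnotAC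
    have tBC := transfer_pi_canon hf stuck hM hs hB hCmem hG hCB.symm hrB hCr hbG hnotBC
    have key : f s(a,c) * f s(a',c) = f s(a,d) * f s(a',d) := by
      rw [tAB.1, tBC.2, ← tAC.2]
    rw [key]
    rcases fpm hf g2 with h | h <;> rcases fpm hf g4 with h' | h' <;>
      rw [h, h'] <;> norm_num


/-- The τ-lemma: the column product of a red edge against a black edge is 1,
provided some red pair has a black cross edge somewhere. -/
lemma tau (hf : ∀ e ∈ allEdges N, f e = 1 ∨ f e = -1)
    (stuck : ∀ M' : Finset (Sym2 (Fin N)), IsPM M' → ∑ e ∈ M', f e ≠ 0)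
    (hM : IsPM M) (hs : ∑ e ∈ M, f e = 2)
    (hthird : ∀ e1 e2 : Sym2 (Fin N), ∃ e3, e3 ∈ M ∧ f e3 = 1 ∧ e3 ≠ e1 ∧ e3 ≠ e2)
    {p q x y : Fin N}
    (hX : s(p,q) ∈ M) (hY : s(x,y) ∈ M) (hXY : s(p,q) ≠ s(x,y))
    (hrX : f s(p,q) = 1) (hrY : f s(x,y) = 1) (hpx : f s(p,x) = -1)
    (hA : s(a,a') ∈ M) (hG : s(c,d) ∈ M) (hrA : f s(a,a') = 1) (hbG : f s(c,d) = -1) :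
    f s(a,c) * f s(a',c) * (f s(a,d) * f s(a',d)) = 1 := by
  by_cases hB : ∃ w w', s(w,w') ∈ M ∧ s(w,w') ≠ s(a,a') ∧ f s(w,w') = 1 ∧
      (f s(a,w) = -1 ∨ f s(a,w') = -1 ∨ f s(a',w) = -1 ∨ f s(a',w') = -1)
  · obtain ⟨w, w', hBm, hBne, hBr, hd⟩ := hB
    rcases hd with h | h | h | h
    · exact tau_aux hf stuck hM hs hthird hA hBm hG hBne.symm hrA hBr hbG h
    · exact tau_aux hf stuck hM hs hthird hA (mem_comm' hBm) hG (ne_comm_r hBne.symm)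
        hrA (f_eq_comm hBr) hbG h
    · have := tau_aux hf stuck hM hs hthird (mem_comm' hA) hBm hG
        (ne_comm_l hBne.symm) (f_eq_comm hrA) hBr hbG h
      linear_combination this
    · have := tau_aux hf stuck hM hs hthird (mem_comm' hA) (mem_comm' hBm) hG
        (ne_comm_l (ne_comm_r hBne.symm)) (f_eq_comm hrA) (f_eq_comm hBr) hbG h
      linear_combination this
  · push_neg at hB
    by_cases hpqA : s(p,q) = s(a,a')
    · have hxyA : s(x,y) ≠ s(a,a') := by rw [← hpqA]; exact hXY.symm
      obtain ⟨c1, c2, c3, c4⟩ := hB x y hY hxyA hrY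
      rw [Sym2.eq_iff] at hpqA
      rcases hpqA with ⟨rfl, rfl⟩ | ⟨rfl, rfl⟩
      · exact absurd hpx c1
      · exact absurd hpx c3
    · by_cases hxyA : s(x,y) = s(a,a')
      · obtain ⟨c1, c2, c3, c4⟩ := hB p q hX hpqA hrX
        rw [Sym2.eq_iff] at hxyA
        rcases hxyA with ⟨rfl, rfl⟩ | ⟨rfl, rfl⟩
        · exact absurd (f_eq_comm hpx) c1
        · exact absurd (f_eq_comm hpx) c3
      · obtain ⟨cp1, cp2, cp3, cp4⟩ := hB p q hX hpqA hrX
        obtain ⟨cx1, cx2, cx3, cx4⟩ := hB x y hY hxyA hrY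
        obtain ⟨-, -, n1, n2, n3, n4⟩ := hM.four hA hX (Ne.symm hpqA)
        obtain ⟨-, -, q1, q2, q3, q4⟩ := hM.four hA hY (Ne.symm hxyA)
        have d1 : f s(a,p) = 1 := by rcases fpm hf n1 with h | h <;> [exact h; exact absurd h cp1]
        have d2 : f s(a,q) = 1 := by rcases fpm hf n2 with h | h <;> [exact h; exact absurd h cp2]
        have d3 : f s(a',p) = 1 := by rcases fpm hf n3 with h | h <;> [exact h; exact absurd h cp3]
        have d4 : f s(a',q) = 1 := by rcases fpm hf n4 with h | h <;> [exact h; exact absurd h cp4]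
        have e1 : f s(a,x) = 1 := by rcases fpm hf q1 with h | h <;> [exact h; exact absurd h cx1]
        have e2 : f s(a,y) = 1 := by rcases fpm hf q2 with h | h <;> [exact h; exact absurd h cx2]
        have e3 : f s(a',x) = 1 := by rcases fpm hf q3 with h | h <;> [exact h; exact absurd h cx3]
        have e4 : f s(a',y) = 1 := by rcases fpm hf q4 with h | h <;> [exact h; exact absurd h cx4]
        have := lemL1 hf stuck hM hs hA hX hY (Ne.symm hpqA) (Ne.symm hxyA) hXY
          hrA hrX hrY d1 d2 d3 d4 e1 e2 e3 e4
        omega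

end Instances

section Counting
variable {N : ℕ} {f : Sym2 (Fin N) → ℤ} {M : Finset (Sym2 (Fin N))}

/-- vertex set of an edge -/
def verts (e : Sym2 (Fin N)) : Finset (Fin N) := Finset.univ.filter (· ∈ e)

lemma verts_mk (a b : Fin N) : verts s(a,b) = {a, b} := by
  ext v
  simp [verts, Sym2.mem_iff]

/-- the cross sum between two matching edges -/
def crossSum (f : Sym2 (Fin N) → ℤ) (A B : Sym2 (Fin N)) : ℤ :=
  ∑ v ∈ verts A, ∑ w ∈ verts B, f s(v,w)

lemma crossSum_mk {a b c d : Fin N} (hab : a ≠ b) (hcd : c ≠ d) :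
    crossSum f s(a,b) s(c,d) = f s(a,c) + f s(a,d) + (f s(b,c) + f s(b,d)) := by
  rw [crossSum, verts_mk, verts_mk]
  rw [Finset.sum_pair hab]
  rw [Finset.sum_pair hcd, Finset.sum_pair hcd]
  all_goals ring

lemma crossSum_comm (A B : Sym2 (Fin N)) : crossSum f A B = crossSum f B A := by
  rw [crossSum, crossSum, Finset.sum_comm]
  congr 1
  ext v
  congr 1
  ext w
  rw [Sym2.eq_swap]

noncomputable def Medge (hM : IsPM M) (v : Fin N) : Sym2 (Fin N) := (hM.2 v).choose

lemma Medge_mem (hM : IsPM M) (v : Fin N) : Medge hM v ∈ M := (hM.2 v).choose_spec.1.1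

lemma Medge_self (hM : IsPM M) (v : Fin N) : v ∈ Medge hM v := (hM.2 v).choose_spec.1.2

lemma Medge_eq (hM : IsPM M) {v : Fin N} {e : Sym2 (Fin N)} (he : e ∈ M) (hv : v ∈ e) :
    Medge hM v = e :=
  hM.unique (Medge_mem hM v) he (Medge_self hM v) hv

/-- KEY IDENTITY -/
lemma key_identity (hM : IsPM M) :
    ∑ p ∈ M.offDiag, crossSum f p.1 p.2
      = 2 * ∑ e ∈ allEdges N, f e - 2 * ∑ e ∈ M, f e := by
  classical
  set P : Finset (Fin N × Fin N) :=
    (Finset.univ ×ˢ Finset.univ).filter (fun q => q.1 ≠ q.2) with hP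
  have hT1 : ∑ q ∈ P, f s(q.1, q.2) = 2 * ∑ e ∈ allEdges N, f e := by
    have hmap : ∀ q ∈ P, s(q.1, q.2) ∈ allEdges N := by
      intro q hq
      simp only [hP, Finset.mem_filter] at hq
      simp [allEdges, hq.2]
    rw [← Finset.sum_fiberwise_of_maps_to hmap (fun q => f s(q.1, q.2)),
      Finset.mul_sum]
    refine Finset.sum_congr rfl ?_
    intro e he
    have hediag : ¬ e.IsDiag := by simpa [allEdges] using he
    induction e with
    | _ a b =>
      have hab : a ≠ b := fun h => hediag (by simp [h])
      have hfib : P.filter (fun q => s(q.1, q.2) = s(a, b)) = {(a,b), (b,a)} := by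
        ext q
        simp only [hP, Finset.mem_filter, Finset.mem_product, Finset.mem_univ, true_and,
          Finset.mem_insert, Finset.mem_singleton, Sym2.eq_iff, Prod.ext_iff]
        constructor
        · rintro ⟨-, (⟨rfl, rfl⟩ | ⟨rfl, rfl⟩)⟩
          · exact Or.inl ⟨rfl, rfl⟩
          · exact Or.inr ⟨rfl, rfl⟩
        · rintro (⟨rfl, rfl⟩ | ⟨rfl, rfl⟩)
          · exact ⟨hab, Or.inl ⟨rfl, rfl⟩⟩
          · exact ⟨hab.symm, Or.inr ⟨rfl, rfl⟩⟩
      rw [hfib, Finset.sum_pair (by simp [Prod.ext_iff]; tauto)]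
      have : s(b, a) = s(a, b) := Sym2.eq_swap
      rw [this]
      all_goals ring
  have hsplit := Finset.sum_filter_add_sum_filter_not P
    (fun q => Medge hM q.1 = Medge hM q.2) (fun q => f s(q.1, q.2))
  have hsame : ∑ q ∈ P.filter (fun q => Medge hM q.1 = Medge hM q.2), f s(q.1, q.2)
      = 2 * ∑ e ∈ M, f e := by
    have hmap : ∀ q ∈ P.filter (fun q => Medge hM q.1 = Medge hM q.2),
        Medge hM q.1 ∈ M := fun q _ => Medge_mem hM q.1
    rw [← Finset.sum_fiberwise_of_maps_to hmap (fun q => f s(q.1, q.2)), Finset.mul_sum]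
    refine Finset.sum_congr rfl ?_
    intro e he
    obtain ⟨a, b, hab, rfl⟩ := hM.labels he
    have hfib : (P.filter (fun q => Medge hM q.1 = Medge hM q.2)).filter
        (fun q => Medge hM q.1 = s(a,b)) = {(a,b), (b,a)} := by
      ext q
      simp only [Finset.mem_filter, hP, Finset.mem_product, Finset.mem_univ, true_and,
        Finset.mem_insert, Finset.mem_singleton, Prod.ext_iff]
      constructor
      · rintro ⟨⟨hne, hsame⟩, h1⟩
        have h2 : Medge hM q.2 = s(a,b) := hsame ▸ h1
        have hq1 : q.1 ∈ s(a,b) := h1 ▸ Medge_self hM q.1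
        have hq2 : q.2 ∈ s(a,b) := h2 ▸ Medge_self hM q.2
        simp only [Sym2.mem_iff] at hq1 hq2
        rcases hq1 with rfl | rfl <;> rcases hq2 with h | h <;> tauto
      · have hMa : Medge hM a = s(a,b) := Medge_eq hM he (by simp)
        have hMb : Medge hM b = s(a,b) := Medge_eq hM he (by simp)
        rintro (⟨rfl, rfl⟩ | ⟨rfl, rfl⟩)
        · exact ⟨⟨hab, by rw [hMa, hMb]⟩, hMa⟩
        · exact ⟨⟨hab.symm, by rw [hMa, hMb]⟩, hMb⟩
    rw [hfib, Finset.sum_pair (by simp [Prod.ext_iff]; tauto)]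
    have : s(b, a) = s(a, b) := Sym2.eq_swap
    rw [this]
    all_goals ring
  have hdiff : ∑ q ∈ P.filter (fun q => ¬ Medge hM q.1 = Medge hM q.2), f s(q.1, q.2)
      = ∑ p ∈ M.offDiag, crossSum f p.1 p.2 := by
    have hmap : ∀ q ∈ P.filter (fun q => ¬ Medge hM q.1 = Medge hM q.2),
        (Medge hM q.1, Medge hM q.2) ∈ M.offDiag := by
      intro q hq
      simp only [Finset.mem_filter] at hq
      exact Finset.mem_offDiag.mpr ⟨Medge_mem hM q.1, Medge_mem hM q.2, hq.2⟩
    rw [← Finset.sum_fiberwise_of_maps_to hmap (fun q => f s(q.1, q.2))]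
    refine Finset.sum_congr rfl ?_
    intro p hp
    rw [Finset.mem_offDiag] at hp
    obtain ⟨hp1, hp2, hp12⟩ := hp
    have hfib : (P.filter (fun q => ¬ Medge hM q.1 = Medge hM q.2)).filter
        (fun q => (Medge hM q.1, Medge hM q.2) = p) = verts p.1 ×ˢ verts p.2 := by
      ext q
      constructor
      · intro hq
        simp only [Finset.mem_filter] at hq
        obtain ⟨⟨-, -⟩, hpair⟩ := hq
        have h1 : Medge hM q.1 = p.1 := (Prod.ext_iff.mp hpair).1
        have h2 : Medge hM q.2 = p.2 := (Prod.ext_iff.mp hpair).2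
        rw [Finset.mem_product]
        constructor
        · simp only [verts, Finset.mem_filter]
          exact ⟨Finset.mem_univ _, h1 ▸ Medge_self hM q.1⟩
        · simp only [verts, Finset.mem_filter]
          exact ⟨Finset.mem_univ _, h2 ▸ Medge_self hM q.2⟩
      · intro hq
        rw [Finset.mem_product] at hq
        obtain ⟨hv, hw⟩ := hq
        simp only [verts, Finset.mem_filter] at hv hw
        have e1 : Medge hM q.1 = p.1 := Medge_eq hM hp1 hv.2
        have e2 : Medge hM q.2 = p.2 := Medge_eq hM hp2 hw.2
        have hne : q.1 ≠ q.2 := by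
          intro h
          rw [h] at e1
          exact hp12 (e1.symm.trans e2)
        simp only [Finset.mem_filter, hP, Finset.mem_product, Finset.mem_univ, true_and]
        exact ⟨⟨hne, by rw [e1, e2]; exact hp12⟩, Prod.ext_iff.mpr ⟨e1, e2⟩⟩
    rw [hfib, Finset.sum_product]
    rfl
  omega
end Counting

section Counting2
variable {N : ℕ} {f : Sym2 (Fin N) → ℤ} {M : Finset (Sym2 (Fin N))}

lemma offDiag_eq_filter (s : Finset (Sym2 (Fin N))) :
    s.offDiag = (s ×ˢ s).filter (fun p => ¬ p.1 = p.2) := by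
  ext p
  simp [Finset.mem_offDiag, Finset.mem_filter, Finset.mem_product]
  tauto

/-- linear sums over the off-diagonal -/
lemma offDiag_sum_linear (g : Sym2 (Fin N) → ℤ) (s : Finset (Sym2 (Fin N))) :
    ∑ p ∈ s.offDiag, (g p.1 + g p.2)
      = 2 * (s.card : ℤ) * (∑ e ∈ s, g e) - 2 * ∑ e ∈ s, g e := by
  classical
  have hsplit := Finset.sum_filter_add_sum_filter_not (s ×ˢ s)
    (fun p => p.1 = p.2) (fun p => g p.1 + g p.2)
  have hall : ∑ p ∈ s ×ˢ s, (g p.1 + g p.2) = 2 * (s.card : ℤ) * (∑ e ∈ s, g e) := by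
    rw [Finset.sum_product]
    have : ∀ A ∈ s, ∑ B ∈ s, (g A + g B) = (s.card : ℤ) * g A + ∑ e ∈ s, g e := by
      intro A _
      rw [Finset.sum_add_distrib, Finset.sum_const, nsmul_eq_mul]
    rw [Finset.sum_congr rfl this, Finset.sum_add_distrib, ← Finset.mul_sum,
      Finset.sum_const, nsmul_eq_mul]
    ring
  have hdiag : ∑ p ∈ (s ×ˢ s).filter (fun p => p.1 = p.2), (g p.1 + g p.2)
      = 2 * ∑ e ∈ s, g e := by
    rw [Finset.mul_sum]
    refine Finset.sum_nbij' (fun p => p.1) (fun e => (e, e)) ?_ ?_ ?_ ?_ ?_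
    · intro p hp
      simp only [Finset.mem_filter, Finset.mem_product] at hp
      exact hp.1.1
    · intro e he
      simp only [Finset.mem_filter, Finset.mem_product]
      exact ⟨⟨he, he⟩, trivial⟩
    · intro p hp
      simp only [Finset.mem_filter, Finset.mem_product] at hp
      exact Prod.ext_iff.mpr ⟨rfl, hp.2⟩
    · intro e _
      rfl
    · intro p hp
      simp only [Finset.mem_filter, Finset.mem_product] at hp
      rw [← hp.2]
      ring
  rw [offDiag_eq_filter]
  omega

/-- halving: a symmetric 4-divisible function sums to a multiple of 8 over offDiag -/
lemma eight_dvd_offDiag (g : Sym2 (Fin N) → Sym2 (Fin N) → ℤ)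
    (hsymm : ∀ A B, g A B = g B A)
    (hdvd : ∀ p ∈ M.offDiag, (4:ℤ) ∣ g p.1 p.2) :
    (8:ℤ) ∣ ∑ p ∈ M.offDiag, g p.1 p.2 := by
  classical
  obtain ⟨ι⟩ : Nonempty (Sym2 (Fin N) ↪ ℕ) :=
    ⟨((Fintype.equivFin (Sym2 (Fin N))).toEmbedding).trans Fin.valEmbedding⟩
  have hsplit := Finset.sum_filter_add_sum_filter_not M.offDiag
    (fun p => ι p.1 < ι p.2) (fun p => g p.1 p.2)
  have hswap : ∑ p ∈ M.offDiag.filter (fun p => ¬ ι p.1 < ι p.2), g p.1 p.2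
      = ∑ p ∈ M.offDiag.filter (fun p => ι p.1 < ι p.2), g p.1 p.2 := by
    refine Finset.sum_nbij' (fun p => p.swap) (fun p => p.swap) ?_ ?_ ?_ ?_ ?_
    · intro p hp
      simp only [Finset.mem_filter, Finset.mem_offDiag] at hp ⊢
      obtain ⟨⟨h1, h2, h3⟩, h4⟩ := hp
      refine ⟨⟨h2, h1, h3.symm⟩, ?_⟩
      have : ι p.1 ≠ ι p.2 := fun h => h3 (ι.injective h)
      simp only [Prod.fst_swap, Prod.snd_swap]
      omega
    · intro p hp
      simp only [Finset.mem_filter, Finset.mem_offDiag] at hp ⊢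
      obtain ⟨⟨h1, h2, h3⟩, h4⟩ := hp
      exact ⟨⟨h2, h1, h3.symm⟩, by simp only [Prod.fst_swap, Prod.snd_swap]; omega⟩
    · intro p _; rfl
    · intro p _; rfl
    · intro p _
      exact hsymm p.1 p.2
  have hdvd1 : (4:ℤ) ∣ ∑ p ∈ M.offDiag.filter (fun p => ι p.1 < ι p.2), g p.1 p.2 :=
    Finset.dvd_sum (fun p hp => hdvd p (Finset.mem_filter.mp hp).1)
  omega

/-- every perfect matching has an even number of edges (via the vertex count) -/
lemma pm_two_mul_card (hM : IsPM M) : 2 * M.card = N := by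
  classical
  have hmap : ∀ v ∈ (Finset.univ : Finset (Fin N)), Medge hM v ∈ M := fun v _ => Medge_mem hM v
  have := Finset.sum_fiberwise_of_maps_to hmap (fun _ => (1:ℤ))
  rw [Finset.sum_const, Finset.card_univ, Fintype.card_fin, nsmul_eq_mul, mul_one] at this
  have hfib : ∀ e ∈ M, ∑ v ∈ Finset.univ.filter (fun v => Medge hM v = e), (1:ℤ) = 2 := by
    intro e he
    obtain ⟨a, b, hab, rfl⟩ := hM.labels he
    have : Finset.univ.filter (fun v => Medge hM v = s(a,b)) = {a, b} := by
      ext v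
      simp only [Finset.mem_filter, Finset.mem_univ, true_and, Finset.mem_insert,
        Finset.mem_singleton]
      constructor
      · intro h
        have := h ▸ Medge_self hM v
        simpa [Sym2.mem_iff] using this
      · rintro (rfl | rfl)
        · exact Medge_eq hM he (by simp)
        · exact Medge_eq hM he (by simp)
    rw [this, Finset.sum_pair hab]
    norm_num
  rw [Finset.sum_congr rfl hfib, Finset.sum_const, nsmul_eq_mul, mul_two] at this
  have : (2 * M.card : ℤ) = N := by push_cast; omega
  exact_mod_cast this

/-- sum of f over the matching in terms of the red count -/
lemma pm_sum_red (hf : ∀ e ∈ allEdges N, f e = 1 ∨ f e = -1) (hM : IsPM M) :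
    ∑ e ∈ M, f e = 2 * ((M.filter (fun e => f e = 1)).card : ℤ) - M.card := by
  classical
  have hsplit := Finset.sum_filter_add_sum_filter_not M (fun e => f e = 1) f
  have h1 : ∑ e ∈ M.filter (fun e => f e = 1), f e
      = ((M.filter (fun e => f e = 1)).card : ℤ) := by
    rw [Finset.sum_congr rfl (fun e he => (Finset.mem_filter.mp he).2),
      Finset.sum_const, nsmul_eq_mul, mul_one]
  have h2 : ∑ e ∈ M.filter (fun e => ¬ f e = 1), f e
      = -((M.filter (fun e => ¬ f e = 1)).card : ℤ) := by
    have : ∀ e ∈ M.filter (fun e => ¬ f e = 1), f e = -1 := by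
      intro e he
      rw [Finset.mem_filter] at he
      have hall : e ∈ allEdges N := by
        rw [mem_allEdges]
        exact hM.1 e he.1
      rcases hf e hall with h | h
      · exact absurd h he.2
      · exact h
    rw [Finset.sum_congr rfl this, Finset.sum_const, nsmul_eq_mul, mul_neg_one]
  have hcard := Finset.card_filter_add_card_filter_not
    (s := M) (p := fun e => f e = 1)
  rw [h1, h2] at hsplit
  have : ((M.filter (fun e => f e = 1)).card : ℤ)
      + ((M.filter (fun e => ¬ f e = 1)).card : ℤ) = (M.card : ℤ) := by
    exact_mod_cast congrArg (Nat.cast (R := ℤ)) hcard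
  omega

/-- a third red edge exists -/
lemma third_red (hf : ∀ e ∈ allEdges N, f e = 1 ∨ f e = -1) (hM : IsPM M)
    (hs : ∑ e ∈ M, f e = 2) {G : Sym2 (Fin N)} (hG : G ∈ M) (hGb : f G = -1) :
    ∀ e1 e2 : Sym2 (Fin N), ∃ e3, e3 ∈ M ∧ f e3 = 1 ∧ e3 ≠ e1 ∧ e3 ≠ e2 := by
  classical
  intro e1 e2
  have hred := pm_sum_red hf hM
  rw [hs] at hred
  have hGmem : G ∈ M.filter (fun e => ¬ f e = 1) := by
    rw [Finset.mem_filter]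
    exact ⟨hG, by omega⟩
  have hb1 : 0 < (M.filter (fun e => ¬ f e = 1)).card := Finset.card_pos.mpr ⟨G, hGmem⟩
  have hcard := Finset.card_filter_add_card_filter_not
    (s := M) (p := fun e => f e = 1)
  have hr3 : 3 ≤ (M.filter (fun e => f e = 1)).card := by omega
  have hnotsub : ¬ (M.filter (fun e => f e = 1)) ⊆ {e1, e2} := by
    intro hsub
    have h1 := Finset.card_le_card hsub
    have h2 : ({e1, e2} : Finset (Sym2 (Fin N))).card ≤ 2 :=
      (Finset.card_insert_le _ _).trans (by simp)
    omega
  obtain ⟨e3, he3, hne⟩ := Finset.not_subset.mp hnotsub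
  simp only [Finset.mem_insert, Finset.mem_singleton, not_or] at hne
  exact ⟨e3, (Finset.mem_filter.mp he3).1, (Finset.mem_filter.mp he3).2, hne.1, hne.2⟩
end Counting2

section Descent
variable {N : ℕ} {f : Sym2 (Fin N) → ℤ} {M : Finset (Sym2 (Fin N))}

lemma descent_step (hf : ∀ e ∈ allEdges N, f e = 1 ∨ f e = -1)
    (hsum : ∑ e ∈ allEdges N, f e = 0) (hM : IsPM M) (hs2 : 2 ≤ ∑ e ∈ M, f e) :
    ∃ M', IsPM M' ∧
      (∑ e ∈ M', f e = ∑ e ∈ M, f e - 2 ∨ ∑ e ∈ M', f e = ∑ e ∈ M, f e - 4) := by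
  classical
  by_contra hno
  push_neg at hno
  have hbound : ∀ p ∈ M.offDiag, 2 * (f p.1 + f p.2) ≤ crossSum f p.1 p.2 := by
    rintro ⟨A, B⟩ hp
    rw [Finset.mem_offDiag] at hp
    obtain ⟨hp1, hp2, hp12⟩ := hp
    obtain ⟨a, b, hab, rfl⟩ := hM.labels hp1
    obtain ⟨c, d, hcd, rfl⟩ := hM.labels hp2
    obtain ⟨-, -, q3, q4, q5, q6⟩ := hM.four hp1 hp2 hp12
    have h4 : a ≠ b ∧ c ≠ d ∧ a ≠ c ∧ a ≠ d ∧ b ≠ c ∧ b ≠ d := ⟨hab, hcd, q3, q4, q5, q6⟩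
    have h4' : a ≠ b ∧ d ≠ c ∧ a ≠ d ∧ a ≠ c ∧ b ≠ d ∧ b ≠ c :=
      ⟨hab, hcd.symm, q4, q3, q6, q5⟩
    have hp2' : s(d,c) ∈ M := mem_comm' hp2
    have hp12' : s(a,b) ≠ s(d,c) := ne_comm_r hp12
    have c1 := hno _ (swap_isPM hM hp1 hp2 hp12 h4)
    have c2 := hno _ (swap_isPM hM hp1 hp2' hp12' h4')
    rw [swap_sum (f := f) hM hp1 hp2 hp12 h4] at c1
    rw [swap_sum (f := f) hM hp1 hp2' hp12' h4'] at c2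
    have hfc : f s(d,c) = f s(c,d) := by rw [Sym2.eq_swap]
    rw [hfc] at c2
    rw [crossSum_mk hab hcd]
    rcases hf _ (mk_mem_allEdges hab) with hA | hA <;>
      rcases hf _ (mk_mem_allEdges hcd) with hB | hB <;>
      rw [hA, hB] at c1 c2 <;>
      rcases fpm hf q3 with h1 | h1 <;> rcases fpm hf q4 with h2 | h2 <;>
      rcases fpm hf q5 with h3 | h3 <;> rcases fpm hf q6 with h4 | h4 <;>
      rw [hA, hB, h1, h2, h3, h4] <;> omega
  have hsumbound := Finset.sum_le_sum hbound
  rw [key_identity hM, hsum] at hsumbound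
  have hlin : ∑ p ∈ M.offDiag, 2 * (f p.1 + f p.2)
      = 2 * (2 * (M.card : ℤ) * (∑ e ∈ M, f e) - 2 * ∑ e ∈ M, f e) := by
    rw [← Finset.mul_sum, offDiag_sum_linear]
  rw [hlin] at hsumbound
  have hcard : 1 ≤ (M.card : ℤ) := by
    have : M.Nonempty := by
      rcases Finset.eq_empty_or_nonempty M with rfl | h
      · simp at hs2
      · exact h
    exact_mod_cast Finset.card_pos.mpr this
  nlinarith [hsumbound, hs2, hcard]

end Descent

section Main
variable {N : ℕ} {f : Sym2 (Fin N) → ℤ} {M : Finset (Sym2 (Fin N))}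

/-- The main contradiction: a stuck matching of sum `2` cannot exist. -/
lemma main_contradiction (hf : ∀ e ∈ allEdges N, f e = 1 ∨ f e = -1)
    (hsum : ∑ e ∈ allEdges N, f e = 0)
    (stuck : ∀ M' : Finset (Sym2 (Fin N)), IsPM M' → ∑ e ∈ M', f e ≠ 0)
    (hM : IsPM M) (hs : ∑ e ∈ M, f e = 2) : False := by
  classical
  have hcard : 1 ≤ (M.card : ℤ) := by
    have : M.Nonempty := by
      rcases Finset.eq_empty_or_nonempty M with rfl | h
      · simp at hs
      · exact h
    exact_mod_cast Finset.card_pos.mpr this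
  by_cases hbad : ∃ p q x y : Fin N, s(p,q) ∈ M ∧ s(x,y) ∈ M ∧ s(p,q) ≠ s(x,y) ∧
      f s(p,q) = 1 ∧ f s(x,y) = 1 ∧ f s(p,x) = -1
  · obtain ⟨p, q, x, y, hX, hY, hXY, hrX, hrY, hpx⟩ := hbad
    have h8 : (8:ℤ) ∣ ∑ pr ∈ M.offDiag, crossSum f pr.1 pr.2 := by
      refine eight_dvd_offDiag (crossSum f) (fun A B => crossSum_comm A B) ?_
      rintro ⟨A, B⟩ hpr
      rw [Finset.mem_offDiag] at hpr
      obtain ⟨hp1, hp2, hp12⟩ := hpr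
      obtain ⟨a, b, hab, rfl⟩ := hM.labels hp1
      obtain ⟨c, d, hcd, rfl⟩ := hM.labels hp2
      obtain ⟨-, -, q3, q4, q5, q6⟩ := hM.four hp1 hp2 hp12
      rw [crossSum_mk hab hcd]
      rcases hf _ (mk_mem_allEdges hab) with hA | hA <;>
        rcases hf _ (mk_mem_allEdges hcd) with hB | hB
      · -- red red
        have e1 := mono hf stuck hM hs hp1 hp2 hp12 hA hB
        have e2 := mono hf stuck hM hs hp1 (mem_comm' hp2) (ne_comm_r hp12) hA
          (f_eq_comm hB)
        rcases fpm hf q3 with h1 | h1 <;> rcases fpm hf q4 with h2 | h2 <;> omega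
      · -- red black
        have hthird := third_red hf hM hs hp2 hB
        have H := tau hf stuck hM hs hthird hX hY hXY hrX hrY hpx hp1 hp2 hA hB
        rcases fpm hf q3 with h1 | h1 <;> rcases fpm hf q4 with h2 | h2 <;>
          rcases fpm hf q5 with h3 | h3 <;> rcases fpm hf q6 with h4 | h4 <;>
          rw [h1, h2, h3, h4] at H ⊢ <;> revert H <;> norm_num
      · -- black red
        have hthird := third_red hf hM hs hp1 hA
        have H := tau hf stuck hM hs hthird hX hY hXY hrX hrY hpx hp2 hp1 hB hA
        rw [show s(c,a) = s(a,c) from Sym2.eq_swap, show s(d,a) = s(a,d) from Sym2.eq_swap,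
          show s(c,b) = s(b,c) from Sym2.eq_swap,
          show s(d,b) = s(b,d) from Sym2.eq_swap] at H
        rcases fpm hf q3 with h1 | h1 <;> rcases fpm hf q4 with h2 | h2 <;>
          rcases fpm hf q5 with h3 | h3 <;> rcases fpm hf q6 with h4 | h4 <;>
          rw [h1, h2, h3, h4] at H ⊢ <;> revert H <;> norm_num
      · -- black black
        have hqy : f s(q,y) = -1 := by
          have := mono hf stuck hM hs hX hY hXY hrX hrY
          omega
        have e1 := bb_mono hf stuck hM hs hX hY hXY hrX hrY hpx hqy hp1 hp2 hp12 hA hB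
        have e2 := bb_mono hf stuck hM hs hX hY hXY hrX hrY hpx hqy hp1 (mem_comm' hp2)
          (ne_comm_r hp12) hA (f_eq_comm hB)
        rcases fpm hf q3 with h1 | h1 <;> rcases fpm hf q4 with h2 | h2 <;> omega
    rw [key_identity hM, hsum, hs] at h8
    norm_num at h8
  · push_neg at hbad
    have hbound : ∀ pr ∈ M.offDiag, 2 * (f pr.1 + f pr.2) ≤ crossSum f pr.1 pr.2 := by
      rintro ⟨A, B⟩ hp
      rw [Finset.mem_offDiag] at hp
      obtain ⟨hp1, hp2, hp12⟩ := hp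
      obtain ⟨a, b, hab, rfl⟩ := hM.labels hp1
      obtain ⟨c, d, hcd, rfl⟩ := hM.labels hp2
      obtain ⟨-, -, q3, q4, q5, q6⟩ := hM.four hp1 hp2 hp12
      dsimp only
      rw [crossSum_mk hab hcd]
      rcases hf _ (mk_mem_allEdges hab) with hA | hA <;>
        rcases hf _ (mk_mem_allEdges hcd) with hB | hB <;> rw [hA, hB]
      · -- red red : all cross edges red since no bad pair
        have c1 : f s(a,c) = 1 := by
          have := hbad a b c d hp1 hp2 hp12 hA hB
          rcases fpm hf q3 with h | h <;> omega
        have c2 : f s(a,d) = 1 := by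
          have := hbad a b d c hp1 (mem_comm' hp2) (ne_comm_r hp12) hA (f_eq_comm hB)
          rcases fpm hf q4 with h | h <;> omega
        have c3 : f s(b,c) = 1 := by
          have := hbad b a c d (mem_comm' hp1) hp2 (ne_comm_l hp12) (f_eq_comm hA) hB
          rcases fpm hf q5 with h | h <;> omega
        have c4 : f s(b,d) = 1 := by
          have := hbad b a d c (mem_comm' hp1) (mem_comm' hp2)
            (ne_comm_l (ne_comm_r hp12)) (f_eq_comm hA) (f_eq_comm hB)
          rcases fpm hf q6 with h | h <;> omega
        omega
      · -- red black
        have c1 := mixed_nonneg hf stuck hM hs hp1 hp2 hA hB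
        have c2 := mixed_nonneg hf stuck hM hs hp1 (mem_comm' hp2) hA (f_eq_comm hB)
        omega
      · -- black red
        have c1 := mixed_nonneg hf stuck hM hs hp2 hp1 hB hA
        have c2 := mixed_nonneg hf stuck hM hs hp2 (mem_comm' hp1) hB (f_eq_comm hA)
        rw [show s(c,a) = s(a,c) from Sym2.eq_swap, show s(d,b) = s(b,d) from Sym2.eq_swap]
          at c1
        rw [show s(c,b) = s(b,c) from Sym2.eq_swap, show s(d,a) = s(a,d) from Sym2.eq_swap]
          at c2
        omega
      · -- black black
        rcases fpm hf q3 with h1 | h1 <;> rcases fpm hf q4 with h2 | h2 <;>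
          rcases fpm hf q5 with h3 | h3 <;> rcases fpm hf q6 with h4 | h4 <;> omega
    have hsumbound := Finset.sum_le_sum hbound
    rw [key_identity hM, hsum, hs] at hsumbound
    have hlin : ∑ p ∈ M.offDiag, 2 * (f p.1 + f p.2)
        = 2 * (2 * (M.card : ℤ) * (∑ e ∈ M, f e) - 2 * ∑ e ∈ M, f e) := by
      rw [← Finset.mul_sum, offDiag_sum_linear]
    rw [hlin, hs] at hsumbound
    nlinarith [hsumbound, hcard]

end Main

section Assemble

lemma exists_pm (n : ℕ) : ∃ M : Finset (Sym2 (Fin (4*n))), IsPM M := by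
  classical
  refine ⟨(Finset.univ : Finset (Fin (2*n))).image
    (fun i => s((⟨i.1, by have := i.2; omega⟩ : Fin (4*n)),
                (⟨i.1 + 2*n, by have := i.2; omega⟩ : Fin (4*n)))), ?_, ?_⟩
  · intro e he
    simp only [Finset.mem_image, Finset.mem_univ, true_and] at he
    obtain ⟨i, rfl⟩ := he
    rw [Sym2.mk_isDiag_iff]
    intro h
    have := congrArg Fin.val h
    simp only at this
    have := i.2
    omega
  · intro v
    have hv := v.2
    have hn : 0 < 2*n := by omega
    refine ⟨s((⟨(if v.1 < 2*n then v.1 else v.1 - 2*n), by split_ifs <;> omega⟩ : Fin (4*n)),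
      (⟨(if v.1 < 2*n then v.1 else v.1 - 2*n) + 2*n, by split_ifs <;> omega⟩ : Fin (4*n))),
      ⟨?_, ?_⟩, ?_⟩
    · simp only [Finset.mem_image, Finset.mem_univ, true_and]
      exact ⟨⟨(if v.1 < 2*n then v.1 else v.1 - 2*n), by split_ifs <;> omega⟩, rfl⟩
    · rw [Sym2.mem_iff]
      by_cases h : v.1 < 2*n
      · left; apply Fin.ext; simp [h]
      · right; apply Fin.ext; simp [h]; omega
    · rintro e ⟨he, hve⟩
      simp only [Finset.mem_image, Finset.mem_univ, true_and] at he
      obtain ⟨j, rfl⟩ := he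
      have hj := j.2
      rw [Sym2.mem_iff] at hve
      have hval : v.1 = j.1 ∨ v.1 = j.1 + 2*n := by
        rcases hve with h | h <;> [left; right] <;> exact congrArg Fin.val h
      refine Sym2.eq_iff.mpr (Or.inl ⟨Fin.ext ?_, Fin.ext ?_⟩) <;>
        simp only <;> split_ifs <;> omega

variable {n : ℕ} {f : Sym2 (Fin (4*n)) → ℤ}

lemma exists_pm2 (hf : ∀ e ∈ allEdges (4*n), f e = 1 ∨ f e = -1)
    (hsum : ∑ e ∈ allEdges (4*n), f e = 0)
    (stuck : ∀ M' : Finset (Sym2 (Fin (4*n))), IsPM M' → ∑ e ∈ M', f e ≠ 0) :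
    ∃ M, IsPM M ∧ (∑ e ∈ M, f e = 2 ∨ ∑ e ∈ M, f e = -2) := by
  classical
  obtain ⟨M₀, hM₀⟩ := exists_pm n
  suffices H : ∀ k : ℕ, ∀ M : Finset (Sym2 (Fin (4*n))), IsPM M →
      (∑ e ∈ M, f e).natAbs ≤ k →
      ∃ M', IsPM M' ∧ (∑ e ∈ M', f e = 2 ∨ ∑ e ∈ M', f e = -2) by
    exact H _ M₀ hM₀ le_rfl
  intro k
  induction k with
  | zero =>
    intro M hM hk
    exfalso
    exact stuck M hM (by omega)
  | succ k ih =>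
    intro M hM hk
    by_cases h2 : ∑ e ∈ M, f e = 2 ∨ ∑ e ∈ M, f e = -2
    · exact ⟨M, hM, h2⟩
    · have hS0 : ∑ e ∈ M, f e ≠ 0 := stuck M hM
      have heven : (2:ℤ) ∣ ∑ e ∈ M, f e := by
        have h1 := pm_sum_red hf hM
        have hcard2 := pm_two_mul_card hM
        omega
      push_neg at h2
      rcases le_or_gt 4 (∑ e ∈ M, f e) with hge | hlt
      · obtain ⟨M', hM', hval⟩ := descent_step hf hsum hM (by omega)
        exact ih M' hM' (by omega)
      · have hle : ∑ e ∈ M, f e ≤ -4 := by omega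
        have hf' : ∀ e ∈ allEdges (4*n), (fun e => -f e) e = 1 ∨ (fun e => -f e) e = -1 := by
          intro e he
          rcases hf e he with h | h <;> simp [h]
        have hsum' : ∑ e ∈ allEdges (4*n), (fun e => -f e) e = 0 := by
          simp [Finset.sum_neg_distrib, hsum]
        have hneg : ∀ M' : Finset (Sym2 (Fin (4*n))),
            ∑ e ∈ M', (fun e => -f e) e = - ∑ e ∈ M', f e := by
          intro M'
          simp [Finset.sum_neg_distrib]
        obtain ⟨M', hM', hval⟩ := descent_step (f := fun e => -f e) hf' hsum' hM
          (by rw [hneg]; omega)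
        rw [hneg, hneg] at hval
        exact ih M' hM' (by omega)

end Assemble


/-- a zero-sum `{-1,1}` labelling of `K_{4n}` admits a zero-sum
perfect matching. -/
theorem stmt1 (n : ℕ) (f : Sym2 (Fin (4 * n)) → ℤ)
    (hf : ∀ e ∈ allEdges (4 * n), f e = 1 ∨ f e = -1)
    (hsum : ∑ e ∈ allEdges (4 * n), f e = 0) :
    ∃ M : Finset (Sym2 (Fin (4 * n))), IsPM M ∧ ∑ e ∈ M, f e = 0 := by
  classical
  by_contra hno
  push_neg at hno
  have stuck : ∀ M : Finset (Sym2 (Fin (4*n))), IsPM M → ∑ e ∈ M, f e ≠ 0 := by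
    intro M hM
    exact hno M hM
  obtain ⟨M, hM, h2⟩ := exists_pm2 hf hsum stuck
  rcases h2 with h2 | h2
  · exact main_contradiction hf hsum stuck hM h2
  · have hf' : ∀ e ∈ allEdges (4*n), (fun e => -f e) e = 1 ∨ (fun e => -f e) e = -1 := by
      intro e he
      rcases hf e he with h | h <;> simp [h]
    have hsum' : ∑ e ∈ allEdges (4*n), (fun e => -f e) e = 0 := by
      simp [Finset.sum_neg_distrib, hsum]
    have stuck' : ∀ M' : Finset (Sym2 (Fin (4*n))), IsPM M' →
        ∑ e ∈ M', (fun e => -f e) e ≠ 0 := by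
      intro M' hM'
      have : ∑ e ∈ M', (fun e => -f e) e = - ∑ e ∈ M', f e := by
        simp [Finset.sum_neg_distrib]
      rw [this]
      have := stuck M' hM'
      omega
    refine main_contradiction hf' hsum' stuck' hM ?_
    have : ∑ e ∈ M, (fun e => -f e) e = - ∑ e ∈ M, f e := by
      simp [Finset.sum_neg_distrib]
    rw [this, h2]
    norm_num
end

section
/- Let M be a perfect matching in a 2-edge-coloured K_{4n} with b(M) > r(M), where b and r count black and red matching edges. If the induced subgraph on V_B(M) is entirely black (monochromatic) and the total numbers of red and black edges in K_{4n} are equal, then the number of red edges in E(V_B(M), V_R(M)) strictly exceeds the number of black edges in E(V_B(M), V_R(M)). -/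
open Finset

lemma inside_eq {N : ℕ} (S : Finset (Fin N)) :
    inside S = S.sym2.filter (fun e => ¬ e.IsDiag) := by
  ext e
  simp [inside, allEdges, Finset.mem_sym2_iff, and_comm]

lemma card_inside {N : ℕ} (S : Finset (Fin N)) :
    (inside S).card = S.card.choose 2 := by
  have hdiag : S.sym2.filter (fun e => e.IsDiag) = S.image Sym2.diag := by
    ext e
    induction e using Sym2.ind with
    | _ x y =>
      simp only [mem_filter, Finset.mk_mem_sym2_iff, mem_image, Sym2.isDiag_iff_proj_eq]
      constructor
      · rintro ⟨⟨hx, hy⟩, h⟩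
        exact ⟨x, hx, by simp [Sym2.diag, h]⟩
      · rintro ⟨a, ha, h⟩
        have : x = a ∧ y = a := by
          have := h.symm
          rw [Sym2.diag] at this
          rw [Sym2.eq_iff] at this
          tauto
        obtain ⟨rfl, rfl⟩ := this
        exact ⟨⟨ha, ha⟩, rfl⟩
  have hcd : (S.sym2.filter (fun e => e.IsDiag)).card = S.card := by
    rw [hdiag]
    exact Finset.card_image_of_injective _ Sym2.diag_injective
  have hsum := Finset.card_filter_add_card_filter_not
    (s := S.sym2) (p := fun e => e.IsDiag)
  rw [Finset.card_sym2] at hsum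
  have hpas : (S.card + 1).choose 2 = S.card + S.card.choose 2 := by
    rw [Nat.choose_succ_succ]
    simp [Nat.choose_one_right]
  rw [inside_eq]
  omega

lemma cnt_union_of_disjoint {N : ℕ} (c : Sym2 (Fin N) → Bool) (b : Bool)
    {X Y : Finset (Sym2 (Fin N))} (h : Disjoint X Y) :
    cnt c b (X ∪ Y) = cnt c b X + cnt c b Y := by
  unfold cnt
  rw [Finset.filter_union, Finset.card_union_of_disjoint]
  exact Finset.disjoint_filter_filter h

lemma mem_between {N : ℕ} {S T : Finset (Fin N)} {x y : Fin N} :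
    s(x, y) ∈ between S T ↔ x ≠ y ∧ ((x ∈ S ∧ y ∈ T) ∨ (y ∈ S ∧ x ∈ T)) := by
  simp only [between, allEdges, mem_filter, mem_univ, true_and, Sym2.isDiag_iff_proj_eq]
  constructor
  · rintro ⟨hne, a, ha, b, hb, hab⟩
    rw [Sym2.eq_iff] at hab
    rcases hab with ⟨rfl, rfl⟩ | ⟨rfl, rfl⟩
    · exact ⟨hne, Or.inl ⟨ha, hb⟩⟩
    · exact ⟨hne, Or.inr ⟨ha, hb⟩⟩
  · rintro ⟨hne, ⟨hx, hy⟩ | ⟨hy, hx⟩⟩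
    · exact ⟨hne, x, hx, y, hy, rfl⟩
    · exact ⟨hne, y, hy, x, hx, Sym2.eq_swap⟩

lemma mem_inside {N : ℕ} {S : Finset (Fin N)} {x y : Fin N} :
    s(x, y) ∈ inside S ↔ x ≠ y ∧ x ∈ S ∧ y ∈ S := by
  simp only [inside, allEdges, mem_filter, mem_univ, true_and, Sym2.isDiag_iff_proj_eq,
    Sym2.mem_iff]
  constructor
  · rintro ⟨hne, h⟩
    exact ⟨hne, h x (Or.inl rfl), h y (Or.inr rfl)⟩
  · rintro ⟨hne, hx, hy⟩
    refine ⟨hne, fun v hv => ?_⟩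
    rcases hv with rfl | rfl <;> assumption

lemma allEdges_decomp {N : ℕ} {B R : Finset (Fin N)} (hU : B ∪ R = univ)
    (hD : Disjoint B R) :
    allEdges N = (inside B ∪ inside R) ∪ between B R := by
  ext e
  induction e using Sym2.ind with
  | _ x y =>
    simp only [mem_union, mem_between, mem_inside, allEdges, mem_filter, mem_univ, true_and,
      Sym2.isDiag_iff_proj_eq]
    constructor
    · intro hne
      have hx : x ∈ B ∨ x ∈ R := by
        have : x ∈ B ∪ R := hU ▸ mem_univ x
        simpa using this
      have hy : y ∈ B ∨ y ∈ R := by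
        have : y ∈ B ∪ R := hU ▸ mem_univ y
        simpa using this
      rcases hx with hx | hx <;> rcases hy with hy | hy
      · exact Or.inl (Or.inl ⟨hne, hx, hy⟩)
      · exact Or.inr ⟨hne, Or.inl ⟨hx, hy⟩⟩
      · exact Or.inr ⟨hne, Or.inr ⟨hy, hx⟩⟩
      · exact Or.inl (Or.inr ⟨hne, hx, hy⟩)
    · rintro ((⟨hne, _⟩ | ⟨hne, _⟩) | ⟨hne, _⟩) <;> exact hne

lemma disj_insides {N : ℕ} {B R : Finset (Fin N)} (hD : Disjoint B R) :
    Disjoint (inside B) (inside R) := by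
  rw [Finset.disjoint_left]
  intro e he he'
  induction e using Sym2.ind with
  | _ x y =>
    rw [mem_inside] at he he'
    exact (Finset.disjoint_left.mp hD he.2.1 he'.2.1)

lemma disj_inside_between {N : ℕ} {B R : Finset (Fin N)} (hD : Disjoint B R) :
    Disjoint (inside B ∪ inside R) (between B R) := by
  rw [Finset.disjoint_left]
  intro e he he'
  induction e using Sym2.ind with
  | _ x y =>
    rw [mem_between] at he'
    rw [mem_union, mem_inside, mem_inside] at he
    rcases he with ⟨_, hx, hy⟩ | ⟨_, hx, hy⟩ <;>
      rcases he'.2 with ⟨h1, h2⟩ | ⟨h1, h2⟩ <;>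
      first
      | exact Finset.disjoint_left.mp hD hy h2
      | exact Finset.disjoint_left.mp hD hx h2
      | exact Finset.disjoint_left.mp hD h1 hx
      | exact Finset.disjoint_left.mp hD h1 hy

lemma card_pair_filter {N : ℕ} {e : Sym2 (Fin N)} (he : ¬ e.IsDiag) :
    (univ.filter (fun v => v ∈ e)).card = 2 := by
  induction e using Sym2.ind with
  | _ x y =>
    rw [Sym2.isDiag_iff_proj_eq] at he
    have : univ.filter (fun v => v ∈ s(x, y)) = {x, y} := by
      ext v
      simp [Sym2.mem_iff]
    rw [this, Finset.card_insert_of_notMem (by simp [he]), Finset.card_singleton]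

lemma card_cover {N : ℕ} {c : Sym2 (Fin N) → Bool} {M : Finset (Sym2 (Fin N))}
    (hM : IsPM M) (b : Bool) :
    (univ.filter (fun v : Fin N => ∃ e ∈ M, v ∈ e ∧ c e = b)).card = 2 * cnt c b M := by
  have heq : univ.filter (fun v : Fin N => ∃ e ∈ M, v ∈ e ∧ c e = b)
      = (M.filter (fun e => c e = b)).biUnion (fun e => univ.filter (fun v => v ∈ e)) := by
    ext v
    simp only [mem_filter, mem_univ, true_and, mem_biUnion]
    tauto
  rw [heq, Finset.card_biUnion]
  · rw [Finset.sum_congr rfl (fun e he => card_pair_filter (hM.1 e (Finset.mem_filter.mp he).1))]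
    simp [cnt, mul_comm]
  · intro e he f hf hne
    rw [Function.onFun, Finset.disjoint_left]
    intro v hv hv'
    simp only [mem_filter, mem_univ, true_and] at hv hv'
    obtain ⟨e0, -, hu⟩ := hM.2 v
    exact hne ((hu e ⟨(Finset.mem_filter.mp he).1, hv⟩).trans
      (hu f ⟨(Finset.mem_filter.mp hf).1, hv'⟩).symm)

lemma VB_VR_union {N : ℕ} {c : Sym2 (Fin N) → Bool} {M : Finset (Sym2 (Fin N))}
    (hM : IsPM M) : VB c M ∪ VR c M = univ := by
  ext v
  simp only [VB, VR, mem_union, mem_filter, mem_univ, true_and, iff_true]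
  obtain ⟨e, ⟨heM, hve⟩, _⟩ := hM.2 v
  cases h : c e
  · exact Or.inl ⟨e, heM, hve, h⟩
  · exact Or.inr ⟨e, heM, hve, h⟩

lemma VB_VR_disj {N : ℕ} {c : Sym2 (Fin N) → Bool} {M : Finset (Sym2 (Fin N))}
    (hM : IsPM M) : Disjoint (VB c M) (VR c M) := by
  rw [Finset.disjoint_left]
  intro v hv hv'
  simp only [VB, VR, mem_filter, mem_univ, true_and] at hv hv'
  obtain ⟨e, heM, hve, hce⟩ := hv
  obtain ⟨f, hfM, hvf, hcf⟩ := hv'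
  obtain ⟨e0, -, hu⟩ := hM.2 v
  have : e = f := (hu e ⟨heM, hve⟩).trans (hu f ⟨hfM, hvf⟩).symm
  rw [this, hcf] at hce
  exact Bool.noConfusion hce

/-- if `b(M) > r(M)`, the induced graph on `V_B(M)` is all black, and the
two colour classes of `K_{4n}` have equal size, then more red than black edges join
`V_B(M)` to `V_R(M)`. -/
theorem stmt4 (n : ℕ) (c : Sym2 (Fin (4 * n)) → Bool) (M : Finset (Sym2 (Fin (4 * n))))
    (hM : IsPM M)
    (htot : cnt c true (allEdges (4 * n)) = cnt c false (allEdges (4 * n)))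
    (hbr : cnt c true M < cnt c false M)
    (hmono : ∀ e ∈ inside (VB c M), c e = false) :
    cnt c false (between (VB c M) (VR c M)) < cnt c true (between (VB c M) (VR c M)) := by
  set B := VB c M with hB
  set R := VR c M with hR
  have hU : B ∪ R = univ := VB_VR_union hM
  have hD : Disjoint B R := VB_VR_disj hM
  set b := cnt c false M with hbdef
  set r := cnt c true M with hrdef
  have hBcard : B.card = 2 * b := card_cover hM false
  have hRcard : R.card = 2 * r := card_cover hM true
  -- decomposition of counts
  have hdec : ∀ col : Bool, cnt c col (allEdges (4 * n)) =
      cnt c col (inside B) + cnt c col (inside R) + cnt c col (between B R) := by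
    intro col
    rw [allEdges_decomp hU hD, cnt_union_of_disjoint _ _ (disj_inside_between hD),
      cnt_union_of_disjoint _ _ (disj_insides hD)]
  -- black count inside B is everything
  have hfB : cnt c false (inside B) = (inside B).card := by
    unfold cnt
    congr 1
    apply Finset.filter_true_of_mem
    intro e he
    exact hmono e he
  have htB : cnt c true (inside B) = 0 := by
    unfold cnt
    rw [Finset.card_eq_zero, Finset.filter_eq_empty_iff]
    intro e he
    rw [hmono e he]
    simp
  have htR : cnt c true (inside R) ≤ (inside R).card := Finset.card_filter_le _ _
  have hchoose : ∀ k : ℕ, (2 * k).choose 2 = k * (2 * k - 1) := by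
    intro k
    rw [Nat.choose_two_right]
    have : 2 * k * (2 * k - 1) = 2 * (k * (2 * k - 1)) := by ring
    rw [this, Nat.mul_div_cancel_left _ (by norm_num)]
  have hIB : (inside B).card = b * (2 * b - 1) := by
    rw [card_inside, hBcard, hchoose]
  have hIR : (inside R).card = r * (2 * r - 1) := by
    rw [card_inside, hRcard, hchoose]
  have hkey : r * (2 * r - 1) < b * (2 * b - 1) := by
    have hb1 : 1 ≤ b := by omega
    calc r * (2 * r - 1) ≤ r * (2 * b - 1) := Nat.mul_le_mul_left r (by omega)
      _ < b * (2 * b - 1) := Nat.mul_lt_mul_of_lt_of_le hbr (le_refl _) (by omega)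
  have h1 := hdec true
  have h2 := hdec false
  rw [htot] at h1
  omega
end

section
/- Let K_{4n} be 2-edge-coloured with exactly 4n^2 - n red edges in total, and let M be a perfect matching with n+1 black and n-1 red edges. If strictly more black than red edges lie in E(V_B(M), V_R(M)), then the induced subgraph G[V_B(M)] contains at least 4n red edges. -/
open Finset

section Aux
variable {N : ℕ} {c : Sym2 (Fin N) → Bool} {M : Finset (Sym2 (Fin N))}

lemma mem_VB' {v : Fin N} : v ∈ VB c M ↔ ∃ e ∈ M, v ∈ e ∧ c e = false := by
  simp [VB]

lemma mem_VR' {v : Fin N} : v ∈ VR c M ↔ ∃ e ∈ M, v ∈ e ∧ c e = true := by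
  simp [VR]

lemma VB_disj (hM : IsPM M) : Disjoint (VB c M) (VR c M) := by
  rw [Finset.disjoint_left]
  intro v hvB hvR
  obtain ⟨e, heM, hve, hce⟩ := mem_VB'.1 hvB
  obtain ⟨f, hfM, hvf, hcf⟩ := mem_VR'.1 hvR
  obtain ⟨g, -, hg⟩ := hM.2 v
  have h1 := hg e ⟨heM, hve⟩
  have h2 := hg f ⟨hfM, hvf⟩
  rw [h1] at hce
  rw [h2] at hcf
  rw [hcf] at hce
  simp at hce

lemma VB_union (hM : IsPM M) : VB c M ∪ VR c M = univ := by
  apply Finset.eq_univ_of_forall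
  intro v
  obtain ⟨e, ⟨heM, hve⟩, -⟩ := hM.2 v
  rcases Bool.eq_false_or_eq_true (c e) with h | h
  · exact Finset.mem_union_right _ (mem_VR'.2 ⟨e, heM, hve, h⟩)
  · exact Finset.mem_union_left _ (mem_VB'.2 ⟨e, heM, hve, h⟩)

lemma card_edge_verts {e : Sym2 (Fin N)} (he : ¬ e.IsDiag) :
    (univ.filter (· ∈ e)).card = 2 := by
  induction e using Sym2.ind with
  | _ a b =>
    rw [Sym2.mk_isDiag_iff] at he
    have : (univ.filter (· ∈ s(a, b)) : Finset (Fin N)) = {a, b} := by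
      ext v; simp [Sym2.mem_iff]
    rw [this, Finset.card_insert_of_notMem (by simp [he]), Finset.card_singleton]

lemma card_V_aux (hM : IsPM M) (b : Bool)
    (V : Finset (Fin N)) (hV : ∀ v, v ∈ V ↔ ∃ e ∈ M, v ∈ e ∧ c e = b) :
    V.card = 2 * cnt c b M := by
  have hVeq : V = (M.filter (fun e => c e = b)).biUnion (fun e => univ.filter (· ∈ e)) := by
    ext v
    simp only [Finset.mem_biUnion, Finset.mem_filter, Finset.mem_univ, true_and, hV v]
    tauto
  rw [hVeq, Finset.card_biUnion]
  · rw [Finset.sum_congr rfl (fun e he => card_edge_verts (hM.1 e (Finset.mem_filter.1 he).1))]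
    simp [cnt, mul_comm]
  · intro e he f hf hef
    rw [Function.onFun, Finset.disjoint_left]
    intro v hve hvf
    simp only [Finset.mem_filter, Finset.mem_univ, true_and] at hve hvf
    obtain ⟨g, -, hg⟩ := hM.2 v
    exact hef ((hg e ⟨(Finset.mem_filter.1 he).1, hve⟩).trans
      (hg f ⟨(Finset.mem_filter.1 hf).1, hvf⟩).symm)

lemma card_between {S T : Finset (Fin N)} (hd : Disjoint S T) :
    (between S T).card = S.card * T.card := by
  have : between S T = (S ×ˢ T).image (fun p => s(p.1, p.2)) := by
    ext e
    simp only [between, allEdges, Finset.mem_filter, Finset.mem_univ, true_and,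
      Finset.mem_image, Finset.mem_product]
    constructor
    · rintro ⟨-, a, ha, b, hb, rfl⟩
      exact ⟨(a, b), ⟨ha, hb⟩, rfl⟩
    · rintro ⟨⟨a, b⟩, ⟨ha, hb⟩, rfl⟩
      have hab : a ≠ b := fun h => Finset.disjoint_left.1 hd ha (h ▸ hb)
      exact ⟨by simpa [Sym2.mk_isDiag_iff] using hab, a, ha, b, hb, rfl⟩
  rw [this, Finset.card_image_of_injOn, Finset.card_product]
  rintro ⟨a, b⟩ hab ⟨a', b'⟩ hab' h
  simp only [Finset.mem_coe, Finset.mem_product] at hab hab'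
  rw [Sym2.eq_iff] at h
  rcases h with ⟨rfl, rfl⟩ | ⟨rfl, rfl⟩
  · rfl
  · exact absurd hab'.2 (Finset.disjoint_left.1 hd hab.1)

lemma inside_subset_image (T : Finset (Fin N)) :
    inside T ⊆ T.offDiag.image (Function.uncurry Sym2.mk) := by
  intro e he
  simp only [inside, allEdges, Finset.mem_filter, Finset.mem_univ, true_and] at he
  obtain ⟨hnd, hall⟩ := he
  induction e using Sym2.ind with
  | _ a b =>
    rw [Sym2.mk_isDiag_iff] at hnd
    refine Finset.mem_image.2 ⟨(a, b), Finset.mem_offDiag.2 ⟨hall a (by simp), hall b (by simp), hnd⟩, rfl⟩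

lemma edges_partition {S T : Finset (Fin N)} (hd : Disjoint S T) (hu : S ∪ T = univ) :
    allEdges N = inside S ∪ inside T ∪ between S T := by
  ext e
  induction e using Sym2.ind with
  | _ a b =>
    simp only [allEdges, inside, between, Finset.mem_union, Finset.mem_filter,
      Finset.mem_univ, true_and]
    constructor
    · intro hnd
      have hmem : ∀ v : Fin N, v ∈ S ∨ v ∈ T := by
        intro v
        have : v ∈ S ∪ T := hu ▸ Finset.mem_univ v
        exact Finset.mem_union.1 this
      rcases hmem a with ha | ha <;> rcases hmem b with hb | hb
      · exact Or.inl (Or.inl ⟨hnd, fun v hv => by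
          rw [Sym2.mem_iff] at hv; rcases hv with rfl | rfl <;> assumption⟩)
      · exact Or.inr ⟨hnd, a, ha, b, hb, rfl⟩
      · exact Or.inr ⟨hnd, b, hb, a, ha, Sym2.eq_swap⟩
      · exact Or.inl (Or.inr ⟨hnd, fun v hv => by
          rw [Sym2.mem_iff] at hv; rcases hv with rfl | rfl <;> assumption⟩)
    · rintro ((⟨h, -⟩ | ⟨h, -⟩) | ⟨h, -⟩) <;> exact h

lemma disj1 {S T : Finset (Fin N)} (hd : Disjoint S T) :
    Disjoint (inside S) (inside T) := by
  rw [Finset.disjoint_left]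
  intro e heS heT
  simp only [inside, allEdges, Finset.mem_filter, Finset.mem_univ, true_and] at heS heT
  induction e using Sym2.ind with
  | _ a b =>
    exact Finset.disjoint_left.1 hd (heS.2 a (by simp)) (heT.2 a (by simp))

lemma disj2 {S T : Finset (Fin N)} (hd : Disjoint S T) :
    Disjoint (inside S ∪ inside T) (between S T) := by
  rw [Finset.disjoint_left]
  intro e he hebet
  simp only [between, Finset.mem_filter] at hebet
  obtain ⟨-, x, hx, y, hy, rfl⟩ := hebet
  rcases Finset.mem_union.1 he with h | h <;>
    simp only [inside, Finset.mem_filter] at h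
  · exact Finset.disjoint_left.1 hd (h.2 y (by simp)) hy
  · exact Finset.disjoint_left.1 hd hx (h.2 x (by simp))

lemma cnt_union {b : Bool} {F G : Finset (Sym2 (Fin N))} (h : Disjoint F G) :
    cnt c b (F ∪ G) = cnt c b F + cnt c b G := by
  unfold cnt
  rw [Finset.filter_union, Finset.card_union_of_disjoint (Finset.disjoint_filter_filter h)]

lemma cnt_add_cnt (F : Finset (Sym2 (Fin N))) :
    cnt c true F + cnt c false F = F.card := by
  unfold cnt
  have h : F.filter (fun e => c e = false) = F.filter (fun e => ¬ (c e = true)) :=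
    Finset.filter_congr (fun e _ => by simp)
  rw [h, Finset.card_filter_add_card_filter_not]

end Aux

/-- with `4n^2 - n` red edges in total, `b(M)=n+1`, `r(M)=n-1`, and strictly
more black than red edges between the parts, at least `4n` red edges lie inside `V_B(M)`. -/

theorem stmt8 (n : ℕ) (hn : 1 ≤ n) (c : Sym2 (Fin (4 * n)) → Bool)
    (M : Finset (Sym2 (Fin (4 * n)))) (hM : IsPM M)
    (hred : cnt c true (allEdges (4 * n)) = 4 * n ^ 2 - n)
    (hb : cnt c false M = n + 1) (hr : cnt c true M = n - 1)
    (hbet : cnt c true (between (VB c M) (VR c M)) < cnt c false (between (VB c M) (VR c M))) :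
    4 * n ≤ cnt c true (inside (VB c M)) := by
  obtain ⟨p, rfl⟩ : ∃ p, n = p + 1 := ⟨n - 1, by omega⟩
  set S := VB c M with hSdef
  set T := VR c M with hTdef
  have hd : Disjoint S T := VB_disj hM
  have hu : S ∪ T = univ := VB_union hM
  have hScard : S.card = 2 * p + 4 := by
    rw [hSdef, card_V_aux hM false _ (fun v => mem_VB'), hb]; ring
  have hTcard : T.card = 2 * p := by
    rw [hTdef, card_V_aux hM true _ (fun v => mem_VR'), hr]; omega
  -- split the red count of all edges
  have hsplit : cnt c true (allEdges (4 * (p + 1)))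
      = cnt c true (inside S) + cnt c true (inside T) + cnt c true (between S T) := by
    rw [edges_partition hd hu, cnt_union (disj2 hd), cnt_union (disj1 hd)]
  set A := cnt c true (inside S)
  set B := cnt c true (inside T)
  set C := cnt c true (between S T)
  set D := cnt c false (between S T)
  -- red inside T bound
  have hB2 : 2 * B + 2 * p ≤ 4 * p ^ 2 := by
    have h1 : 2 * B ≤ 2 * p * (2 * p) - 2 * p := by
      calc 2 * B ≤ 2 * (inside T).card := by
            exact Nat.mul_le_mul_left 2 (Finset.card_filter_le _ _)
        _ ≤ 2 * (T.offDiag.image (Function.uncurry Sym2.mk)).card :=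
            Nat.mul_le_mul_left 2 (Finset.card_le_card (inside_subset_image T))
        _ = T.offDiag.card := Sym2.two_mul_card_image_offDiag T
        _ = T.card * T.card - T.card := by rw [Finset.offDiag_card]
        _ = 2 * p * (2 * p) - 2 * p := by rw [hTcard]
    have h2 : 2 * p ≤ 2 * p * (2 * p) := by nlinarith
    calc 2 * B + 2 * p ≤ (2 * p * (2 * p) - 2 * p) + 2 * p := Nat.add_le_add_right h1 _
      _ = 2 * p * (2 * p) := Nat.sub_add_cancel h2
      _ = 4 * p ^ 2 := by ring
  -- between counts
  have hCD : C + D = 4 * p ^ 2 + 8 * p := by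
    have := cnt_add_cnt (c := c) (between S T)
    rw [card_between hd, hScard, hTcard] at this
    rw [this]; ring
  -- total
  have e1 : A + B + C = 4 * p ^ 2 + 7 * p + 3 := by
    rw [← hsplit, hred]
    exact Nat.sub_eq_of_eq_add (by ring)
  obtain ⟨P, hP⟩ : ∃ P, P = p ^ 2 := ⟨_, rfl⟩
  rw [← hP] at hB2 hCD e1
  clear hP hred hr hsplit
  omega
end
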